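/- arXiv:1206.3926 — 3 statements merged into one kernel-verified Lean document; each statement's English description precedes it below -/
import Mathlib

section
/- (Sufficient condition for the weak maximum principle.) Let Ω be a bounded open set in ℝ^N, N ≥ 2, let D = (d_ij), d_ij ∈ L^∞(Ω), with d_ij ≤ 0 a.e. for all i ≠ j, and let C = (1/2)(D + Dᵗ) be the symmetrized matrix. Let Ω' ⊆ Ω be open and suppose the first symmetric eigenvalue is positive: λ_1^s(Ω') := inf{ R(V) : V ∈ C^1_c(Ω';ℝ^m), V ≠ 0 } > 0, where R(V) = (∫_{Ω'} [Σ_i |∇v_i|² + Σ_{i,j} c_ij v_i v_j] dx) / (∫_{Ω'} |V|² dx). Then the maximum principle holds for −Δ + D in Ω': every U ∈ C¹(Ω̄';ℝ^m) with U ≤ 0 on ∂Ω' and −ΔU + DU ≤ 0 weakly in Ω' satisfies U ≤ 0 in Ω'. -/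
open MeasureTheory Real Set
open scoped RealInnerProductSpace ENNReal

noncomputable section

/-- Euclidean space `ℝ^N`. -/
abbrev EuclN (N : ℕ) := EuclideanSpace ℝ (Fin N)

/-- The Laplacian of a scalar function on `ℝ^N`. -/
def lap {N : ℕ} (u : EuclN N → ℝ) (x : EuclN N) : ℝ :=
  ∑ i : Fin N, iteratedFDeriv ℝ 2 u x ![EuclideanSpace.single i 1, EuclideanSpace.single i 1]

/-- Partial derivative `∂f/∂u_j` of `f(r, u)` with respect to the `j`-th `u`-variable. -/
def pd {m : ℕ} (f : ℝ → (Fin m → ℝ) → ℝ) (j : Fin m) (r : ℝ) (s : Fin m → ℝ) : ℝ :=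
  fderiv ℝ (f r) s (Pi.single j 1)

/-- `Ψ ∈ C^1_c(Ω'; ℝ^m)`. -/
def IsTestFun {N m : ℕ} (Ω' : Set (EuclN N)) (Ψ : Fin m → EuclN N → ℝ) : Prop :=
  ∀ i, ContDiff ℝ 1 (Ψ i) ∧ HasCompactSupport (Ψ i) ∧ tsupport (Ψ i) ⊆ Ω'

/-- The quadratic form `Q_U(Ψ; Ω')` of the linearized operator at a solution `U`. -/
def Qform {N m : ℕ} (f : Fin m → ℝ → (Fin m → ℝ) → ℝ) (U : Fin m → EuclN N → ℝ)
    (Ω' : Set (EuclN N)) (Ψ : Fin m → EuclN N → ℝ) : ℝ :=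
  ∫ x in Ω', ((∑ i, ‖gradient (Ψ i) x‖ ^ 2) -
    ∑ i, ∑ j, pd (f i) j ‖x‖ (fun k => U k x) * Ψ i x * Ψ j x)

/-- There is a `k`-dimensional subspace of `C^1_c(Ω'; ℝ^m)` on which `Q_U(·; Ω')`
is negative definite. -/
def NegDefFamily {N m : ℕ} (f : Fin m → ℝ → (Fin m → ℝ) → ℝ) (U : Fin m → EuclN N → ℝ)
    (Ω' : Set (EuclN N)) (k : ℕ) : Prop :=
  ∃ Ψ : Fin k → Fin m → EuclN N → ℝ,
    (∀ l, IsTestFun Ω' (Ψ l)) ∧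
    ∀ c : Fin k → ℝ, c ≠ 0 → Qform f U Ω' (fun i x => ∑ l, c l * Ψ l i x) < 0

/-- The semilinear system is cooperative (weakly coupled) in `Ω'`. -/
def CoopAlong {N m : ℕ} (f : Fin m → ℝ → (Fin m → ℝ) → ℝ) (Ω' : Set (EuclN N)) : Prop :=
  ∀ i j, i ≠ j → ∀ x ∈ Ω', ∀ s : Fin m → ℝ, 0 ≤ pd (f i) j ‖x‖ s

/-- The semilinear system is fully coupled along the solution `U` in `Ω'`. -/
def FullyCoupledAlong {N m : ℕ} (f : Fin m → ℝ → (Fin m → ℝ) → ℝ)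
    (U : Fin m → EuclN N → ℝ) (Ω' : Set (EuclN N)) : Prop :=
  CoopAlong f Ω' ∧
  ∀ I J : Finset (Fin m), I.Nonempty → J.Nonempty → Disjoint I J → I ∪ J = Finset.univ →
    ∃ i₀ ∈ I, ∃ j₀ ∈ J,
      0 < volume {x ∈ Ω' | 0 < pd (f i₀) j₀ ‖x‖ (fun k => U k x)}

/-- `Ω` is an open ball or annulus centered at the origin. -/
def IsBallOrAnnulus {N : ℕ} (Ω : Set (EuclN N)) : Prop :=
  (∃ R : ℝ, 0 < R ∧ Ω = Metric.ball (0 : EuclN N) R) ∨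
  (∃ r R : ℝ, 0 < r ∧ r < R ∧ Ω = {x : EuclN N | r < ‖x‖ ∧ ‖x‖ < R})

/-- The half-domain `Ω(e) = {x ∈ Ω : x·e > 0}`. -/
def halfDom {N : ℕ} (Ω : Set (EuclN N)) (e : EuclN N) : Set (EuclN N) :=
  {x ∈ Ω | 0 < ⟪x, e⟫}

/-- Reflection through the hyperplane `T(e) = {x : x·e = 0}`. -/
def reflPt {N : ℕ} (e x : EuclN N) : EuclN N := x - (2 * ⟪x, e⟫) • e

/-- `U` is foliated Schwarz symmetric on `Ω` with respect to the axis `p`. -/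
def FoliatedSchwarzWith {N m : ℕ} (Ω : Set (EuclN N)) (U : Fin m → EuclN N → ℝ)
    (p : EuclN N) : Prop :=
  ‖p‖ = 1 ∧ ∀ i, ∀ x ∈ Ω, ∀ y ∈ Ω, ‖x‖ = ‖y‖ → ⟪y, p⟫ ≤ ⟪x, p⟫ → U i y ≤ U i x

/-- `U` is foliated Schwarz symmetric on `Ω`. -/
def FoliatedSchwarz {N m : ℕ} (Ω : Set (EuclN N)) (U : Fin m → EuclN N → ℝ) : Prop :=
  ∃ p : EuclN N, FoliatedSchwarzWith Ω U p

/-- `U` is radial on `Ω`. -/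
def IsRadial {N m : ℕ} (Ω : Set (EuclN N)) (U : Fin m → EuclN N → ℝ) : Prop :=
  ∀ i, ∀ x ∈ Ω, ∀ y ∈ Ω, ‖x‖ = ‖y‖ → U i x = U i y

/-- `U` is a classical solution of `-Δu_i = f_i(|x|, U)` in `Ω`, `u_i = 0` on `∂Ω`. -/
def IsSolution {N m : ℕ} (Ω : Set (EuclN N)) (f : Fin m → ℝ → (Fin m → ℝ) → ℝ)
    (U : Fin m → EuclN N → ℝ) : Prop :=
  (∀ i, ∀ x ∈ Ω, -lap (U i) x = f i ‖x‖ (fun k => U k x)) ∧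
  (∀ i, ∀ x ∈ frontier Ω, U i x = 0)

/-- The bilinear form of the linear system `-ΔU + C(x) U`. -/
def BformL {N m : ℕ} (Ω' : Set (EuclN N)) (C : Fin m → Fin m → EuclN N → ℝ)
    (V Φ : Fin m → EuclN N → ℝ) : ℝ :=
  ∫ x in Ω', ((∑ i, ⟪gradient (V i) x, gradient (Φ i) x⟫) +
    ∑ i, ∑ j, C i j x * V i x * Φ j x)

/-- `-ΔU + D U ≥ 0` weakly in `Ω'`. -/
def WeakSuperSol {N m : ℕ} (Ω' : Set (EuclN N)) (D : Fin m → Fin m → EuclN N → ℝ)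
    (U : Fin m → EuclN N → ℝ) : Prop :=
  ∀ Ψ : Fin m → EuclN N → ℝ, IsTestFun Ω' Ψ → (∀ i x, 0 ≤ Ψ i x) →
    0 ≤ BformL Ω' D U Ψ

/-- `-ΔU + D U ≤ 0` weakly in `Ω'`. -/
def WeakSubSol {N m : ℕ} (Ω' : Set (EuclN N)) (D : Fin m → Fin m → EuclN N → ℝ)
    (U : Fin m → EuclN N → ℝ) : Prop :=
  ∀ Ψ : Fin m → EuclN N → ℝ, IsTestFun Ω' Ψ → (∀ i x, 0 ≤ Ψ i x) →
    BformL Ω' D U Ψ ≤ 0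

/-- The linear system with matrix `D` is cooperative in `Ω`: `d_ij ≤ 0` a.e. for `i ≠ j`. -/
def LinCoop {N m : ℕ} (Ω : Set (EuclN N)) (D : Fin m → Fin m → EuclN N → ℝ) : Prop :=
  ∀ i j, i ≠ j → ∀ᵐ x ∂(volume : Measure (EuclN N)), x ∈ Ω → D i j x ≤ 0

/-- The linear system with matrix `D` is fully coupled in `Ω`. -/
def LinFullyCoupled {N m : ℕ} (Ω : Set (EuclN N)) (D : Fin m → Fin m → EuclN N → ℝ) : Prop :=
  LinCoop Ω D ∧
  ∀ I J : Finset (Fin m), I.Nonempty → J.Nonempty → Disjoint I J → I ∪ J = Finset.univ →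
    ∃ i₀ ∈ I, ∃ j₀ ∈ J, 0 < volume {x ∈ Ω | D i₀ j₀ x < 0}

/-- First symmetric eigenvalue on `Ω'`: the infimum of the Rayleigh quotient of the
symmetric matrix `C` over nontrivial test functions. -/
def lamOneSym {N m : ℕ} (Ω' : Set (EuclN N)) (C : Fin m → Fin m → EuclN N → ℝ) : ℝ :=
  sInf {r : ℝ | ∃ Ψ : Fin m → EuclN N → ℝ, IsTestFun Ω' Ψ ∧ (∃ i x, Ψ i x ≠ 0) ∧
    r = BformL Ω' C Ψ Ψ / ∫ x in Ω', ∑ i, (Ψ i x) ^ 2}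

end

/-!
Suppose `u_{i₀}(x₀) > 0`. Test the subsolution inequality against `Ψ = ψ_τ(U)`, where `ψ_τ` is a
`C¹` version of the positive part that vanishes on `(-∞, τ]`; by the boundary condition `Ψ` has
compact support in `Ω'`. Since `∇ψ_τ(u_i) = ψ_τ'(u_i) ∇u_i` with `0 ≤ ψ_τ' ≤ 1`, and
`u - 2τ ≤ ψ_τ(u) ≤ u⁺`, cooperativity (`d_ij ≤ 0` for `i ≠ j`) gives
`B(Ψ, Ψ) ≤ B(U, Ψ) + O(τ) ≤ O(τ)`. On the other hand `B(Ψ, Ψ)` only sees the symmetric part of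
`D`, so `B(Ψ, Ψ) ≥ λ₁ˢ ‖Ψ‖²`, and `‖Ψ‖²` stays bounded below as `τ → 0` because of a ball on
which `u_{i₀} > u_{i₀}(x₀) / 2`. Letting `τ → 0` contradicts `λ₁ˢ > 0`.
-/

open Filter Topology

/-- A `C¹` approximation of `s ↦ max s 0`: it vanishes on `(-∞, τ]` and has slope `1` on
`[2τ, ∞)`. -/
noncomputable def smoothPosPart (τ s : ℝ) : ℝ :=
  ∫ u in (0 : ℝ)..s, Real.smoothTransition ((u - τ) / τ)

namespace smoothPosPart

variable {τ : ℝ}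

lemma continuous_slope : Continuous fun u : ℝ => Real.smoothTransition ((u - τ) / τ) :=
  Real.smoothTransition.continuous.comp (by fun_prop)

lemma hasDerivAt (s : ℝ) :
    HasDerivAt (smoothPosPart τ) (Real.smoothTransition ((s - τ) / τ)) s :=
  intervalIntegral.integral_hasDerivAt_right (continuous_slope.intervalIntegrable _ _)
    continuous_slope.aestronglyMeasurable.stronglyMeasurableAtFilter continuous_slope.continuousAt

lemma contDiff : ContDiff ℝ 1 (smoothPosPart τ) := by
  rw [contDiff_one_iff_deriv]
  refine ⟨fun s => (hasDerivAt s).differentiableAt, ?_⟩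
  simpa only [funext fun s => (hasDerivAt (τ := τ) s).deriv] using continuous_slope

lemma eq_zero (hτ : 0 < τ) {s : ℝ} (hs : s ≤ τ) : smoothPosPart τ s = 0 := by
  have hslope : EqOn (fun u : ℝ => Real.smoothTransition ((u - τ) / τ)) 0 (uIcc 0 s) := by
    intro u hu
    have hu' : u ≤ τ := (le_max_iff.mp hu.2).elim (·.trans hτ.le) (·.trans hs)
    exact Real.smoothTransition.zero_of_nonpos (div_nonpos_of_nonpos_of_nonneg (by linarith) hτ.le)
  rw [smoothPosPart, intervalIntegral.integral_congr hslope]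
  simp

lemma nonneg (hτ : 0 < τ) (s : ℝ) : 0 ≤ smoothPosPart τ s := by
  rcases le_total s 0 with h | h
  · rw [eq_zero hτ (h.trans hτ.le)]
  · exact intervalIntegral.integral_nonneg h fun u _ => Real.smoothTransition.nonneg _

lemma le_max (hτ : 0 < τ) (s : ℝ) : smoothPosPart τ s ≤ max s 0 := by
  rcases le_total s 0 with h | h
  · rw [eq_zero hτ (h.trans hτ.le)]; exact le_max_right _ _
  · calc smoothPosPart τ s ≤ ∫ _ in (0 : ℝ)..s, (1 : ℝ) :=
          intervalIntegral.integral_mono_on h (continuous_slope.intervalIntegrable _ _)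
            intervalIntegrable_const fun u _ => Real.smoothTransition.le_one _
      _ = s := by simp
      _ ≤ max s 0 := le_max_left _ _

lemma sub_le (hτ : 0 < τ) (s : ℝ) : s - 2 * τ ≤ smoothPosPart τ s := by
  rcases le_total s (2 * τ) with h | h
  · linarith [nonneg hτ s]
  have hslope : EqOn (fun u : ℝ => Real.smoothTransition ((u - τ) / τ)) 1 (uIcc (2 * τ) s) := by
    intro u hu
    refine Real.smoothTransition.one_of_one_le ((le_div_iff₀ hτ).mpr ?_)
    linarith [(uIcc_of_le h ▸ hu).1]
  have htail : ∫ u in (2 * τ)..s, Real.smoothTransition ((u - τ) / τ) = s - 2 * τ := by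
    rw [intervalIntegral.integral_congr hslope]; simp
  have hsplit : smoothPosPart τ s = smoothPosPart τ (2 * τ) + (s - 2 * τ) := by
    rw [smoothPosPart, smoothPosPart, ← htail, intervalIntegral.integral_add_adjacent_intervals
      (continuous_slope.intervalIntegrable _ _) (continuous_slope.intervalIntegrable _ _)]
  linarith [nonneg hτ (2 * τ)]

lemma le_abs (hτ : 0 < τ) (s : ℝ) : smoothPosPart τ s ≤ |s| :=
  (le_max hτ s).trans (max_le (le_abs_self s) (abs_nonneg s))

lemma mul_self_le (hτ : 0 < τ) {d u M S : ℝ} (hd : |d| ≤ M) (hS : smoothPosPart τ u ≤ S) :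
    d * smoothPosPart τ u * smoothPosPart τ u ≤ d * u * smoothPosPart τ u + 2 * τ * M * S := by
  set p := smoothPosPart τ u
  have hp : 0 ≤ p := nonneg hτ u
  have hgap : 0 ≤ (u - p) * p ∧ (u - p) * p ≤ 2 * τ * S := by
    rcases le_total u 0 with hu | hu
    · have hp0 : p = 0 := eq_zero hτ (hu.trans hτ.le)
      simp only [hp0, mul_zero, le_refl, true_and]
      exact mul_nonneg (by positivity) (hp.trans hS)
    have hpu : p ≤ u := (le_max hτ u).trans (max_eq_left hu).le
    exact ⟨mul_nonneg (by linarith) hp, by nlinarith [sub_le hτ u]⟩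
  have hM : -d ≤ M := (neg_le_abs d).trans hd
  nlinarith [mul_le_mul_of_nonneg_right hM hgap.1,
    mul_le_mul_of_nonneg_left hgap.2 ((abs_nonneg d).trans hd)]

lemma mul_le_of_nonpos (hτ : 0 < τ) {d u q M S : ℝ} (hd : d ≤ 0) (hdM : |d| ≤ M)
    (hq : 0 ≤ q) (hqS : q ≤ S) :
    d * smoothPosPart τ u * q ≤ d * u * q + 2 * τ * M * S := by
  have hdq : d * q ≤ 0 := mul_nonpos_of_nonpos_of_nonneg hd hq
  have hM : -d ≤ M := (neg_le_abs d).trans hdM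
  nlinarith [mul_le_mul_of_nonpos_left (sub_le hτ u) hdq,
    mul_le_mul hM hqS hq ((abs_nonneg d).trans hdM)]

end smoothPosPart

/-- A `C¹` substitute for the test function `U⁺`. -/
noncomputable def smoothPosPartOn {N m : ℕ} (Ω' : Set (EuclN N)) (τ : ℝ)
    (U : Fin m → EuclN N → ℝ) : Fin m → EuclN N → ℝ :=
  fun i => Ω'.indicator fun x => smoothPosPart τ (U i x)

namespace smoothPosPartOn

variable {N m : ℕ} {Ω' : Set (EuclN N)} {τ : ℝ} {U : Fin m → EuclN N → ℝ}

lemma eq_of_mem {i : Fin m} {x : EuclN N} (hx : x ∈ Ω') :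
    smoothPosPartOn Ω' τ U i x = smoothPosPart τ (U i x) :=
  indicator_of_mem hx _

lemma nonneg (hτ : 0 < τ) (i : Fin m) (x : EuclN N) : 0 ≤ smoothPosPartOn Ω' τ U i x :=
  indicator_nonneg (fun _ _ => smoothPosPart.nonneg hτ _) x

lemma tsupport_subset (hτ : 0 < τ) {i : Fin m} (hU : ContinuousOn (U i) (closure Ω')) :
    tsupport (smoothPosPartOn Ω' τ U i) ⊆ closure Ω' ∩ U i ⁻¹' Ici τ := by
  refine closure_minimal ?_ (hU.preimage_isClosed_of_isClosed isClosed_closure isClosed_Ici)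
  intro x hx
  have hxΩ' : x ∈ Ω' := by_contra fun h => hx (indicator_of_notMem h _)
  refine ⟨subset_closure hxΩ', show τ ≤ U i x from le_of_not_ge fun hUx => hx ?_⟩
  rw [eq_of_mem hxΩ', smoothPosPart.eq_zero hτ hUx]

lemma isTestFun (hτ : 0 < τ) (hΩ'o : IsOpen Ω') (hΩ'b : Bornology.IsBounded Ω')
    (hU : ∀ i, ContDiffOn ℝ 1 (U i) (closure Ω')) (hbdry : ∀ i, ∀ x ∈ frontier Ω', U i x ≤ 0) :
    IsTestFun Ω' (smoothPosPartOn Ω' τ U) := by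
  intro i
  have hsupp := tsupport_subset hτ (hU i).continuousOn
  have hsuppΩ' : tsupport (smoothPosPartOn Ω' τ U i) ⊆ Ω' := by
    intro x hx
    by_contra hxΩ'
    have hfr : x ∈ frontier Ω' := by
      rw [hΩ'o.frontier_eq]; exact ⟨(hsupp hx).1, hxΩ'⟩
    have hτU : τ ≤ U i x := (hsupp hx).2
    linarith [hbdry i x hfr]
  refine ⟨contDiff_iff_contDiffAt.mpr fun x => ?_,
    hΩ'b.isCompact_closure.of_isClosed_subset (isClosed_tsupport _)
      (hsupp.trans inter_subset_left), hsuppΩ'⟩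
  by_cases hx : x ∈ Ω'
  · have hΩ'x : Ω' ∈ 𝓝 x := hΩ'o.mem_nhds hx
    refine ((smoothPosPart.contDiff (τ := τ)).contDiffAt.comp x
      ((hU i).contDiffAt (mem_of_superset hΩ'x subset_closure))).congr_of_eventuallyEq ?_
    filter_upwards [hΩ'x] with y hy using eq_of_mem hy
  · exact contDiffAt_const.congr_of_eventuallyEq
      (notMem_tsupport_iff_eventuallyEq.mp fun h => hx (hsuppΩ' h))

lemma gradient_eq (hΩ'o : IsOpen Ω') {i : Fin m} {x : EuclN N} (hx : x ∈ Ω')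
    (hU : DifferentiableAt ℝ (U i) x) :
    gradient (smoothPosPartOn Ω' τ U i) x
      = Real.smoothTransition ((U i x - τ) / τ) • gradient (U i) x := by
  have hderiv : HasFDerivAt (smoothPosPartOn Ω' τ U i)
      (Real.smoothTransition ((U i x - τ) / τ) • fderiv ℝ (U i) x) x := by
    refine ((smoothPosPart.hasDerivAt _).comp_hasFDerivAt x hU.hasFDerivAt).congr_of_eventuallyEq ?_
    filter_upwards [hΩ'o.mem_nhds hx] with y hy using eq_of_mem hy
  rw [gradient, hderiv.fderiv, map_smul, gradient]

end smoothPosPartOn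

lemma real_inner_smul_self_le {E : Type*} [NormedAddCommGroup E] [InnerProductSpace ℝ E]
    {σ : ℝ} (hσ₀ : 0 ≤ σ) (hσ₁ : σ ≤ 1) (v : E) : ⟪σ • v, σ • v⟫ ≤ ⟪v, σ • v⟫ := by
  simp only [real_inner_smul_left, real_inner_smul_right]
  nlinarith [mul_nonneg (mul_nonneg hσ₀ (real_inner_self_nonneg (x := v))) (sub_nonneg.mpr hσ₁)]

lemma gradient_eq_zero_of_notMem_tsupport {E : Type*} [NormedAddCommGroup E]
    [InnerProductSpace ℝ E] [CompleteSpace E] {f : E → ℝ} {x : E}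
    (hx : x ∉ tsupport f) : gradient f x = 0 := by
  rw [gradient, (notMem_tsupport_iff_eventuallyEq.mp hx).fderiv_eq]
  simp

lemma continuousOn_gradient {E : Type*} [NormedAddCommGroup E] [InnerProductSpace ℝ E]
    [CompleteSpace E] {f : E → ℝ} {s : Set E} (hs : IsOpen s)
    (hf : ContDiffOn ℝ 1 f s) : ContinuousOn (gradient f) s :=
  (InnerProductSpace.toDual ℝ _).symm.continuous.comp_continuousOn
    (hf.continuousOn_fderiv_of_isOpen hs le_rfl)

section BilinearForm

variable {N m : ℕ} {Ω' : Set (EuclN N)} {C : Fin m → Fin m → EuclN N → ℝ}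
  {V Φ : Fin m → EuclN N → ℝ}

noncomputable def bformDensity (C : Fin m → Fin m → EuclN N → ℝ) (V Φ : Fin m → EuclN N → ℝ)
    (x : EuclN N) : ℝ :=
  (∑ i, ⟪gradient (V i) x, gradient (Φ i) x⟫) + ∑ i, ∑ j, C i j x * V i x * Φ j x

lemma BformL_eq_integral : BformL Ω' C V Φ = ∫ x in Ω', bformDensity C V Φ x := rfl

lemma BformL_symmetrize (Ψ : Fin m → EuclN N → ℝ) :
    BformL Ω' (fun i j x => (C i j x + C j i x) / 2) Ψ Ψ = BformL Ω' C Ψ Ψ := by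
  simp only [BformL_eq_integral, bformDensity]
  congr! 2 with x
  have hswap : ∑ i, ∑ j, C j i x * Ψ i x * Ψ j x = ∑ i, ∑ j, C i j x * Ψ i x * Ψ j x := by
    rw [Finset.sum_comm]; simp only [mul_right_comm]
  simp only [add_div, add_mul, Finset.sum_add_distrib, div_mul_eq_mul_div, ← Finset.sum_div, hswap]
  ring

lemma integrableOn_bformDensity (hΩ'o : IsOpen Ω') (hC : ∀ i j, Measurable (C i j))
    (hCb : ∀ i j, ∃ M, ∀ x ∈ Ω', |C i j x| ≤ M) (hV : ∀ i, ContDiffOn ℝ 1 (V i) Ω')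
    (hΦ : IsTestFun Ω' Φ) : IntegrableOn (bformDensity C V Φ) Ω' := by
  have hK j : IsCompact (tsupport (Φ j)) := (hΦ j).2.1.isCompact
  have hKΩ' j : tsupport (Φ j) ⊆ Ω' := (hΦ j).2.2
  have hΦc j : Continuous (Φ j) := (hΦ j).1.continuous
  -- every term of the density vanishes off the compact support of one `Φ j`
  have hlocal j (f : EuclN N → ℝ) (hf : IntegrableOn f (tsupport (Φ j)))
      (h0 : ∀ x ∉ tsupport (Φ j), f x = 0) : IntegrableOn f Ω' :=
    hf.of_forall_sdiff_eq_zero hΩ'o.measurableSet fun x hx => h0 x hx.2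
  refine Integrable.add (integrable_finsetSum _ fun i _ => ?_)
    (integrable_finsetSum _ fun i _ => integrable_finsetSum _ fun j _ => ?_)
  · refine hlocal i _ (ContinuousOn.integrableOn_compact (hK i) ?_)
      fun x hx => by simp [gradient_eq_zero_of_notMem_tsupport hx]
    exact ((continuousOn_gradient hΩ'o (hV i)).mono (hKΩ' i)).inner
      ((continuousOn_gradient isOpen_univ (hΦ i).1.contDiffOn).mono (subset_univ _))
  · obtain ⟨M, hM⟩ := hCb i j
    simp only [mul_assoc]
    refine hlocal j _ (Integrable.bdd_mul (c := M)
      (ContinuousOn.integrableOn_compact (hK j) (((hV i).continuousOn.mono (hKΩ' j)).mul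
        (hΦc j).continuousOn)) (hC i j).aestronglyMeasurable ?_)
      fun x hx => by simp [image_eq_zero_of_notMem_tsupport hx]
    filter_upwards [ae_restrict_mem (hK j).measurableSet] with x hx
    exact hM x (hKΩ' j hx)

end BilinearForm

lemma LinCoop.mono {N m : ℕ} {Ω Ω' : Set (EuclN N)} {D : Fin m → Fin m → EuclN N → ℝ}
    (h : LinCoop Ω D) (hsub : Ω' ⊆ Ω) : LinCoop Ω' D :=
  fun i j hij => (h i j hij).mono fun _ hx hxΩ' => hx (hsub hxΩ')

lemma LinCoop.ae_offDiag_nonpos {N m : ℕ} {Ω : Set (EuclN N)} {D : Fin m → Fin m → EuclN N → ℝ}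
    (h : LinCoop Ω D) : ∀ᵐ x, x ∈ Ω → ∀ i j, i ≠ j → D i j x ≤ 0 := by
  have hij : ∀ i j, ∀ᵐ x, i ≠ j → x ∈ Ω → D i j x ≤ 0 := fun i j => by
    by_cases hij : i = j
    · exact Eventually.of_forall fun _ h => absurd hij h
    · filter_upwards [h i j hij] with x hx using fun _ => hx
  filter_upwards [ae_all_iff.mpr fun i => ae_all_iff.mpr (hij i)] with x hx hxΩ i j hne
    using hx i j hne hxΩ

lemma lamOneSym_mul_le {N m : ℕ} {Ω' : Set (EuclN N)} {C : Fin m → Fin m → EuclN N → ℝ}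
    {Ψ : Fin m → EuclN N → ℝ} (hlam : 0 < lamOneSym Ω' C) (hΨ : IsTestFun Ω' Ψ)
    (hne : ∃ i x, Ψ i x ≠ 0) :
    lamOneSym Ω' C * ∫ x in Ω', ∑ i, Ψ i x ^ 2 ≤ BformL Ω' C Ψ Ψ := by
  have hbdd : BddBelow {r : ℝ | ∃ Ψ : Fin m → EuclN N → ℝ, IsTestFun Ω' Ψ ∧
      (∃ i x, Ψ i x ≠ 0) ∧ r = BformL Ω' C Ψ Ψ / ∫ x in Ω', ∑ i, (Ψ i x) ^ 2} := by
    by_contra h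
    exact hlam.ne' (Real.sInf_of_not_bddBelow h)
  have hle : lamOneSym Ω' C ≤ BformL Ω' C Ψ Ψ / ∫ x in Ω', ∑ i, Ψ i x ^ 2 :=
    csInf_le hbdd ⟨Ψ, hΨ, hne, rfl⟩
  rcases (integral_nonneg fun x => Finset.sum_nonneg fun i _ => sq_nonneg (Ψ i x) :
      0 ≤ ∫ x in Ω', ∑ i, Ψ i x ^ 2).eq_or_lt with hQ | hQ
  · rw [← hQ, div_zero] at hle
    exact absurd hle hlam.not_ge
  · exact (le_div_iff₀ hQ).mp hle

lemma measureReal_mul_sq_le_integral_sum_sq {N m : ℕ} {Ω' B : Set (EuclN N)}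
    {Ψ : Fin m → EuclN N → ℝ} (hΨ : IsTestFun Ω' Ψ) (hB : MeasurableSet B) (hBΩ' : B ⊆ Ω')
    (hBvol : volume B ≠ ∞) {c : ℝ} (hc : 0 ≤ c) (i₀ : Fin m) (hcΨ : ∀ x ∈ B, c ≤ Ψ i₀ x) :
    volume.real B * c ^ 2 ≤ ∫ x in Ω', ∑ i, Ψ i x ^ 2 := by
  have hint : Integrable fun x => ∑ i, Ψ i x ^ 2 := by
    refine integrable_finsetSum _ fun i _ => ?_
    have hsupp : HasCompactSupport fun x => Ψ i x ^ 2 :=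
      (hΨ i).2.1.comp_left (g := fun t : ℝ => t ^ 2) (zero_pow two_ne_zero)
    exact ((hΨ i).1.continuous.pow 2).integrable_of_hasCompactSupport hsupp
  calc volume.real B * c ^ 2 ≤ ∫ x in B, ∑ i, Ψ i x ^ 2 :=
        setIntegral_ge_of_const_le hB hBvol (fun x hx => (pow_le_pow_left₀ hc (hcΨ x hx) 2).trans
          (Finset.single_le_sum (fun i _ => sq_nonneg (Ψ i x)) (Finset.mem_univ i₀)))
          hint.integrableOn
    _ ≤ ∫ x in Ω', ∑ i, Ψ i x ^ 2 :=
        setIntegral_mono_set hint.integrableOn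
          (Eventually.of_forall fun x => Finset.sum_nonneg fun i _ => sq_nonneg (Ψ i x))
          hBΩ'.eventuallyLE

namespace smoothPosPartOn

variable {N m : ℕ} {Ω' : Set (EuclN N)} {τ M S : ℝ} {D : Fin m → Fin m → EuclN N → ℝ}
  {U : Fin m → EuclN N → ℝ}

lemma bformDensity_le (hτ : 0 < τ) (hΩ'o : IsOpen Ω') {x : EuclN N} (hx : x ∈ Ω')
    (hoff : ∀ i j, i ≠ j → D i j x ≤ 0) (hDM : ∀ i j, |D i j x| ≤ M)
    (hU : ∀ i, DifferentiableAt ℝ (U i) x) (hUS : ∀ i, |U i x| ≤ S) :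
    bformDensity D (smoothPosPartOn Ω' τ U) (smoothPosPartOn Ω' τ U) x ≤
      bformDensity D U (smoothPosPartOn Ω' τ U) x + m ^ 2 * (2 * τ * M * S) := by
  have hgrad i : ⟪gradient (smoothPosPartOn Ω' τ U i) x, gradient (smoothPosPartOn Ω' τ U i) x⟫
      ≤ ⟪gradient (U i) x, gradient (smoothPosPartOn Ω' τ U i) x⟫ := by
    rw [gradient_eq hΩ'o hx (hU i)]
    exact real_inner_smul_self_le (Real.smoothTransition.nonneg _)
      (Real.smoothTransition.le_one _) _
  have hS j : smoothPosPartOn Ω' τ U j x ≤ S := by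
    rw [eq_of_mem hx]; exact (smoothPosPart.le_abs hτ _).trans (hUS j)
  have hterm i j : D i j x * smoothPosPartOn Ω' τ U i x * smoothPosPartOn Ω' τ U j x ≤
      D i j x * U i x * smoothPosPartOn Ω' τ U j x + 2 * τ * M * S := by
    rcases eq_or_ne i j with rfl | hij
    · have hSi := hS i
      rw [eq_of_mem hx] at hSi ⊢
      exact smoothPosPart.mul_self_le hτ (hDM i i) hSi
    · rw [eq_of_mem hx (i := i)]
      exact smoothPosPart.mul_le_of_nonpos hτ (hoff i j hij) (hDM i j) (nonneg hτ j x) (hS j)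
  have hsum := Finset.sum_le_sum fun i (_ : i ∈ Finset.univ) =>
    Finset.sum_le_sum fun j (_ : j ∈ Finset.univ) => hterm i j
  simp only [Finset.sum_add_distrib, Finset.sum_const, Finset.card_univ, Fintype.card_fin,
    nsmul_eq_mul] at hsum
  unfold bformDensity
  linarith [Finset.sum_le_sum fun i (_ : i ∈ Finset.univ) => hgrad i]

lemma BformL_le (hτ : 0 < τ) (hΩ'o : IsOpen Ω') (hvol : volume Ω' ≠ ∞)
    (hD : ∀ i j, Measurable (D i j)) (hDM : ∀ i j, ∀ x ∈ Ω', |D i j x| ≤ M)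
    (hcoop : LinCoop Ω' D) (hU : ∀ i, ContDiffOn ℝ 1 (U i) Ω')
    (hUS : ∀ i, ∀ x ∈ Ω', |U i x| ≤ S) (hΨ : IsTestFun Ω' (smoothPosPartOn Ω' τ U)) :
    BformL Ω' D (smoothPosPartOn Ω' τ U) (smoothPosPartOn Ω' τ U) ≤
      BformL Ω' D U (smoothPosPartOn Ω' τ U) + volume.real Ω' * (m ^ 2 * (2 * τ * M * S)) := by
  have hDb i j : ∃ M, ∀ x ∈ Ω', |D i j x| ≤ M := ⟨M, hDM i j⟩
  have hintU := integrableOn_bformDensity hΩ'o hD hDb hU hΨ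
  have hintΨ := integrableOn_bformDensity hΩ'o hD hDb (fun i => (hΨ i).1.contDiffOn) hΨ
  have hconst : IntegrableOn (fun _ => (m ^ 2 * (2 * τ * M * S) : ℝ)) Ω' := integrableOn_const hvol
  have hpt : ∀ᵐ x ∂volume.restrict Ω',
      bformDensity D (smoothPosPartOn Ω' τ U) (smoothPosPartOn Ω' τ U) x ≤
        bformDensity D U (smoothPosPartOn Ω' τ U) x + m ^ 2 * (2 * τ * M * S) := by
    filter_upwards [ae_restrict_mem hΩ'o.measurableSet,
      ae_restrict_of_ae hcoop.ae_offDiag_nonpos] with x hx hoff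
    exact bformDensity_le hτ hΩ'o hx (hoff hx) (fun i j => hDM i j x hx)
      (fun i => ((hU i).contDiffAt (hΩ'o.mem_nhds hx)).differentiableAt one_ne_zero)
      (fun i => hUS i x hx)
  calc BformL Ω' D (smoothPosPartOn Ω' τ U) (smoothPosPartOn Ω' τ U)
      ≤ ∫ x in Ω', (bformDensity D U (smoothPosPartOn Ω' τ U) x + m ^ 2 * (2 * τ * M * S)) :=
        setIntegral_mono_ae_restrict hintΨ (hintU.add hconst) hpt
    _ = _ := by rw [integral_add hintU hconst, setIntegral_const, smul_eq_mul]; rfl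

end smoothPosPartOn

lemma exists_forall_abs_le {ι α : Type*} [Finite ι] {s : Set α} {f : ι → α → ℝ}
    (h : ∀ i, ∃ M, ∀ x ∈ s, |f i x| ≤ M) : ∃ M, ∀ i, ∀ x ∈ s, |f i x| ≤ M := by
  choose M hM using h
  obtain ⟨M', hM'⟩ := Finite.exists_le M
  exact ⟨M', fun i x hx => (hM i x hx).trans (hM' i)⟩

lemma nonpos_of_forall_le_mul {x K δ : ℝ} (hδ : 0 < δ) (h : ∀ τ ∈ Ioc 0 δ, x ≤ τ * K) :
    x ≤ 0 := by
  have hlim : Tendsto (· * K) (𝓝[>] 0) (𝓝 0) := by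
    simpa using ((continuous_mul_const K).tendsto 0).mono_left nhdsWithin_le_nhds
  exact ge_of_tendsto hlim (by filter_upwards [Ioc_mem_nhdsGT hδ] using h)

lemma WeakSubSol.lamOneSym_mul_measureReal_mul_sq_le {N m : ℕ} {Ω' B : Set (EuclN N)}
    {D : Fin m → Fin m → EuclN N → ℝ} {U : Fin m → EuclN N → ℝ} {M S τ c : ℝ}
    (hsubsol : WeakSubSol Ω' D U) (hΩ'o : IsOpen Ω') (hΩ'b : Bornology.IsBounded Ω')
    (hD : ∀ i j, Measurable (D i j)) (hDM : ∀ i j, ∀ x ∈ Ω', |D i j x| ≤ M)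
    (hcoop : LinCoop Ω' D) (hlam : 0 < lamOneSym Ω' (fun i j x => (D i j x + D j i x) / 2))
    (hU : ∀ i, ContDiffOn ℝ 1 (U i) (closure Ω')) (hbdry : ∀ i, ∀ x ∈ frontier Ω', U i x ≤ 0)
    (hUS : ∀ i, ∀ x ∈ Ω', |U i x| ≤ S) (hτ : 0 < τ) (hc : 0 < c) (hB : MeasurableSet B)
    (hBΩ' : B ⊆ Ω') (hBne : B.Nonempty) (i₀ : Fin m) (hcU : ∀ x ∈ B, c + 2 * τ ≤ U i₀ x) :
    lamOneSym Ω' (fun i j x => (D i j x + D j i x) / 2) * (volume.real B * c ^ 2) ≤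
      τ * (2 * m ^ 2 * M * S * volume.real Ω') := by
  set Ψ := smoothPosPartOn Ω' τ U
  have hΨ : IsTestFun Ω' Ψ := smoothPosPartOn.isTestFun hτ hΩ'o hΩ'b hU hbdry
  have hcΨ : ∀ x ∈ B, c ≤ Ψ i₀ x := fun x hx => by
    show c ≤ smoothPosPartOn Ω' τ U i₀ x
    rw [smoothPosPartOn.eq_of_mem (hBΩ' hx)]
    linarith [smoothPosPart.sub_le hτ (U i₀ x), hcU x hx]
  obtain ⟨x₀, hx₀⟩ := hBne
  calc _ ≤ lamOneSym Ω' (fun i j x => (D i j x + D j i x) / 2) * ∫ x in Ω', ∑ i, Ψ i x ^ 2 :=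
        mul_le_mul_of_nonneg_left (measureReal_mul_sq_le_integral_sum_sq hΨ hB hBΩ'
          ((hΩ'b.subset hBΩ').measure_lt_top.ne) hc.le i₀ hcΨ) hlam.le
    _ ≤ BformL Ω' (fun i j x => (D i j x + D j i x) / 2) Ψ Ψ :=
        lamOneSym_mul_le hlam hΨ ⟨i₀, x₀, (hc.trans_le (hcΨ x₀ hx₀)).ne'⟩
    _ = BformL Ω' D Ψ Ψ := BformL_symmetrize Ψ
    _ ≤ BformL Ω' D U Ψ + volume.real Ω' * (m ^ 2 * (2 * τ * M * S)) :=
        smoothPosPartOn.BformL_le hτ hΩ'o hΩ'b.measure_lt_top.ne hD hDM hcoop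
          (fun i => (hU i).mono subset_closure) hUS hΨ
    _ ≤ τ * (2 * m ^ 2 * M * S * volume.real Ω') := by
        linarith [hsubsol Ψ hΨ (smoothPosPartOn.nonneg hτ)]

theorem statement5_general
    {N m : ℕ}
    (Ω : Set (EuclN N)) (hΩb : Bornology.IsBounded Ω)
    (D : Fin m → Fin m → EuclN N → ℝ)
    (hmeas : ∀ i j, Measurable (D i j))
    (hbdd : ∀ i j, ∃ M : ℝ, ∀ x ∈ Ω, |D i j x| ≤ M)
    (hcoop : LinCoop Ω D)
    (Ω' : Set (EuclN N)) (hΩ'o : IsOpen Ω') (hsub : Ω' ⊆ Ω)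
    (hlam : 0 < lamOneSym Ω' (fun i j x => (D i j x + D j i x) / 2))
    (U : Fin m → EuclN N → ℝ)
    (hUreg : ∀ i, ContDiffOn ℝ 1 (U i) (closure Ω'))
    (hbdry : ∀ i, ∀ x ∈ frontier Ω', U i x ≤ 0)
    (hsubsol : WeakSubSol Ω' D U) :
    ∀ i, ∀ x ∈ Ω', U i x ≤ 0 := by
  intro i₀ x₀ hx₀
  by_contra! ha
  have hΩ'b : Bornology.IsBounded Ω' := hΩb.subset hsub
  obtain ⟨M, hM⟩ := exists_forall_abs_le (f := fun p : Fin m × Fin m => D p.1 p.2)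
    fun p => (hbdd p.1 p.2).imp fun _ h x hx => h x (hsub hx)
  obtain ⟨S, hS⟩ := exists_forall_abs_le fun i =>
    (hΩ'b.isCompact_closure.exists_bound_of_continuousOn (hUreg i).continuousOn).imp
      fun _ h x hx => h x (subset_closure hx)
  obtain ⟨ρ, hρ, hball⟩ : ∃ ρ > 0, Metric.ball x₀ ρ ⊆ Ω' ∩ U i₀ ⁻¹' Ioi (U i₀ x₀ / 2) :=
    Metric.mem_nhds_iff.mp <| inter_mem (hΩ'o.mem_nhds hx₀) <|
      (hUreg i₀).continuousOn.continuousAt (mem_of_superset (hΩ'o.mem_nhds hx₀) subset_closure)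
        (Ioi_mem_nhds (half_lt_self ha))
  have hB : 0 < volume.real (Metric.ball x₀ ρ) :=
    ENNReal.toReal_pos (Metric.measure_ball_pos volume x₀ hρ).ne' measure_ball_lt_top.ne
  refine (by positivity : 0 < lamOneSym Ω' (fun i j x => (D i j x + D j i x) / 2) *
    (volume.real (Metric.ball x₀ ρ) * (U i₀ x₀ / 4) ^ 2)).not_ge
    (nonpos_of_forall_le_mul (δ := U i₀ x₀ / 8) (K := 2 * m ^ 2 * M * S * volume.real Ω')
      (by positivity) fun τ hτ => ?_)
  refine hsubsol.lamOneSym_mul_measureReal_mul_sq_le hΩ'o hΩ'b hmeas (fun i j => hM (i, j))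
    (hcoop.mono hsub) hlam hUreg hbdry hS hτ.1 (by positivity) measurableSet_ball
    (fun x hx => (hball hx).1) ⟨x₀, Metric.mem_ball_self hρ⟩ i₀ fun x hx => ?_
  have hUx : U i₀ x₀ / 2 < U i₀ x := (hball hx).2
  linarith [hτ.2]

/-- **Sufficient condition for the weak maximum principle:** positivity of the first
symmetric eigenvalue implies the maximum principle for `-Δ + D` in `Ω'`. -/
theorem statement5
    {N m : ℕ} (hN : 2 ≤ N)
    (Ω : Set (EuclN N)) (hΩo : IsOpen Ω) (hΩb : Bornology.IsBounded Ω)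
    (D : Fin m → Fin m → EuclN N → ℝ)
    (hmeas : ∀ i j, Measurable (D i j))
    (hbdd : ∀ i j, ∃ M : ℝ, ∀ x ∈ Ω, |D i j x| ≤ M)
    (hcoop : LinCoop Ω D)
    (Ω' : Set (EuclN N)) (hΩ'o : IsOpen Ω') (hsub : Ω' ⊆ Ω)
    (hlam : 0 < lamOneSym Ω' (fun i j x => (D i j x + D j i x) / 2))
    (U : Fin m → EuclN N → ℝ)
    (hUreg : ∀ i, ContDiffOn ℝ 1 (U i) (closure Ω'))
    (hbdry : ∀ i, ∀ x ∈ frontier Ω', U i x ≤ 0)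
    (hsubsol : WeakSubSol Ω' D U) :
    ∀ i, ∀ x ∈ Ω', U i x ≤ 0 :=
  statement5_general Ω hΩb D hmeas hbdd hcoop Ω' hΩ'o hsub hlam U hUreg hbdry hsubsol
end

section
/- (Monotonicity of the first eigenvalue with respect to the coefficients.) Let Ω be a bounded open set in ℝ^N, N ≥ 2, and let C = (c_ij), C' = (c'_ij) be symmetric matrices with entries in L^∞(Ω), such that the system −ΔU + C(x)U is cooperative and fully coupled in Ω and c_ij ≥ c'_ij a.e. in Ω for all i,j. Let λ_1 := inf{ R(V) : V ∈ C^1_c(Ω;ℝ^m), V ≠ 0 } and λ'_1 := inf{ R'(V) : V ∈ C^1_c(Ω;ℝ^m), V ≠ 0 } be the first eigenvalues of the two systems, where R, R' are the Rayleigh quotients of C and C'. Assume λ_1 is attained by a first eigenfunction W¹ ∈ C¹(Ω̄;ℝ^m), W¹ = 0 on ∂Ω, W¹ ≠ 0, with B(W¹,V) = λ_1 ∫_Ω W¹·V dx for all V ∈ C^1_c(Ω;ℝ^m). Then λ_1 ≥ λ'_1. -/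
open MeasureTheory Real Set
open scoped RealInnerProductSpace ENNReal

/-!
For a test function `Ψ`, the vector `|Ψ| = (|ψ_1|, …, |ψ_m|)` has the same Dirichlet energy
and the same `L²` norm, while cooperativity (`c_ij ≤ 0` off the diagonal) gives
`c_ij |ψ_i| |ψ_j| ≤ c_ij ψ_i ψ_j`; together with `c'_ij ≤ c_ij` this yields
`R'(|Ψ|) ≤ R(|Ψ|) ≤ R(Ψ)`, hence `λ'_1 ≤ λ_1`. Since `|Ψ|` is not `C¹`, it is replaced by
`φ_ε ∘ Ψ` with `φ_ε(t) = √(t² + ε²) - ε`, a `C¹` function with `|φ_ε'| ≤ 1` and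
`|t| - ε ≤ φ_ε(t) ≤ |t|`; the resulting error terms are `O(ε)`, and `ε → 0⁺` concludes.
-/

open Filter Topology

noncomputable section

def smoothAbs (ε t : ℝ) : ℝ := √(t ^ 2 + ε ^ 2) - ε

section SmoothAbs

variable {ε : ℝ}

lemma abs_le_sqrt_sq_add_sq (t ε : ℝ) : |t| ≤ √(t ^ 2 + ε ^ 2) := by
  rw [← sqrt_sq_eq_abs]
  exact sqrt_le_sqrt (le_add_of_nonneg_right (sq_nonneg ε))

lemma smoothAbs_nonneg (ε t : ℝ) : 0 ≤ smoothAbs ε t := by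
  have : |ε| ≤ √(t ^ 2 + ε ^ 2) := add_comm (ε ^ 2) (t ^ 2) ▸ abs_le_sqrt_sq_add_sq ε t
  unfold smoothAbs
  linarith [le_abs_self ε]

lemma abs_sub_le_smoothAbs (ε t : ℝ) : |t| - ε ≤ smoothAbs ε t := by
  unfold smoothAbs
  linarith [abs_le_sqrt_sq_add_sq t ε]

lemma smoothAbs_le_abs (hε : 0 ≤ ε) (t : ℝ) : smoothAbs ε t ≤ |t| := by
  have : √(t ^ 2 + ε ^ 2) ≤ |t| + ε := by
    rw [← sqrt_sq (by positivity : 0 ≤ |t| + ε)]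
    exact sqrt_le_sqrt (by nlinarith [sq_abs t, abs_nonneg t])
  unfold smoothAbs
  linarith

lemma smoothAbs_eq_zero_iff (hε : 0 ≤ ε) {t : ℝ} : smoothAbs ε t = 0 ↔ t = 0 := by
  constructor
  · intro h
    have : √(t ^ 2 + ε ^ 2) = √(ε ^ 2) := by
      rw [sqrt_sq hε]
      unfold smoothAbs at h
      linarith
    rw [sqrt_inj (by positivity) (by positivity)] at this
    simpa using this
  · rintro rfl
    simp [smoothAbs, sqrt_sq hε]

lemma contDiff_smoothAbs (hε : ε ≠ 0) : ContDiff ℝ 1 (smoothAbs ε) :=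
  ((contDiff_id.pow 2).add contDiff_const).sqrt (fun t => by positivity) |>.sub contDiff_const

lemma hasDerivAt_smoothAbs (hε : ε ≠ 0) (t : ℝ) :
    HasDerivAt (smoothAbs ε) (t / √(t ^ 2 + ε ^ 2)) t := by
  have hpos : 0 < t ^ 2 + ε ^ 2 := by positivity
  refine (((hasDerivAt_pow 2 t).add_const (ε ^ 2)).sqrt hpos.ne').sub_const ε
    |>.congr_deriv ?_
  field_simp [(sqrt_pos.2 hpos).ne']
  norm_num

lemma abs_div_sqrt_sq_add_sq_le_one (t ε : ℝ) : |t / √(t ^ 2 + ε ^ 2)| ≤ 1 := by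
  rw [abs_div, abs_of_nonneg (sqrt_nonneg _)]
  exact div_le_one_of_le₀ (abs_le_sqrt_sq_add_sq t ε) (sqrt_nonneg _)

end SmoothAbs

section ApproxAbs

variable {a b p q c c' ε : ℝ}

lemma abs_mul_abs_sub_le_mul (hp : p ≤ |a|) (hpa : |a| - ε ≤ p) (hq : q ≤ |b|) (hqb : |b| - ε ≤ q) :
    |a| * |b| - ε * (|a| + |b|) ≤ p * q := by
  have h₁ : |a| * (|b| - q) ≤ |a| * ε := mul_le_mul_of_nonneg_left (by linarith) (abs_nonneg a)
  have h₂ : q * (|a| - p) ≤ |b| * ε :=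
    mul_le_mul hq (by linarith) (by linarith) (abs_nonneg b)
  linarith

lemma mul_mul_le_of_nonpos (hc' : c' ≤ c) (hc : c ≤ 0) (hp0 : 0 ≤ p) (hp : p ≤ |a|)
    (hpa : |a| - ε ≤ p) (hq0 : 0 ≤ q) (hq : q ≤ |b|) (hqb : |b| - ε ≤ q) :
    c' * p * q ≤ c * a * b + ε * (|c| * (|a| + |b|)) := by
  have hpq := abs_mul_abs_sub_le_mul hp hpa hq hqb
  calc c' * p * q = c' * (p * q) := mul_assoc _ _ _
    _ ≤ c * (p * q) := mul_le_mul_of_nonneg_right hc' (mul_nonneg hp0 hq0)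
    _ ≤ c * (|a| * |b| - ε * (|a| + |b|)) := mul_le_mul_of_nonpos_left hpq hc
    _ = -|c * a * b| + ε * (|c| * (|a| + |b|)) := by
      rw [abs_mul, abs_mul, abs_of_nonpos hc]; ring
    _ ≤ c * a * b + ε * (|c| * (|a| + |b|)) := by linarith [neg_abs_le (c * a * b)]

lemma mul_mul_self_le (hc' : c' ≤ c) (hp0 : 0 ≤ p) (hp : p ≤ |a|) (hpa : |a| - ε ≤ p) :
    c' * p * p ≤ c * a * a + ε * (|c'| * (|a| + |a|)) := by
  have hpp := abs_mul_abs_sub_le_mul hp hpa hp hpa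
  rw [abs_mul_abs_self] at hpp
  have hpp' : p * p ≤ a * a := by
    rw [← abs_mul_abs_self a]; exact mul_le_mul hp hp hp0 (abs_nonneg a)
  calc c' * p * p = c' * (a * a) - c' * (a * a - p * p) := by ring
    _ ≤ c' * (a * a) + |c'| * (a * a - p * p) := by
      linarith [neg_abs_le c', mul_le_mul_of_nonneg_right (neg_abs_le c')
        (sub_nonneg.2 hpp')]
    _ ≤ c * (a * a) + |c'| * (ε * (|a| + |a|)) := by
      gcongr
      · exact mul_self_nonneg a
      · linarith
    _ = c * a * a + ε * (|c'| * (|a| + |a|)) := by ring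

end ApproxAbs

lemma sq_smoothAbs_le {ε : ℝ} (hε : 0 ≤ ε) (t : ℝ) : smoothAbs ε t ^ 2 ≤ t ^ 2 := by
  rw [← sq_abs t]
  exact pow_le_pow_left₀ (smoothAbs_nonneg ε t) (smoothAbs_le_abs hε t) 2

lemma sq_sub_le_sq_smoothAbs {ε : ℝ} (hε : 0 ≤ ε) (t : ℝ) :
    t ^ 2 - ε * (2 * |t|) ≤ smoothAbs ε t ^ 2 := by
  have h := abs_mul_abs_sub_le_mul (smoothAbs_le_abs hε t) (abs_sub_le_smoothAbs ε t)
    (smoothAbs_le_abs hε t) (abs_sub_le_smoothAbs ε t)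
  rw [abs_mul_abs_self] at h
  rw [sq, sq]
  linarith

lemma sum_sum_mul_smoothAbs_le {ι : Type*} [Fintype ι] {c c' M : ι → ι → ℝ} {ε : ℝ}
    (hε : 0 ≤ ε) (hle : ∀ i j, c' i j ≤ c i j) (hcoop : ∀ i j, i ≠ j → c i j ≤ 0)
    (hM : ∀ i j, |c i j| ≤ M i j ∧ |c' i j| ≤ M i j) (a : ι → ℝ) :
    ∑ i, ∑ j, c' i j * smoothAbs ε (a i) * smoothAbs ε (a j) ≤
      ∑ i, ∑ j, c i j * a i * a j + ε * ∑ i, ∑ j, M i j * (|a i| + |a j|) := by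
  simp only [Finset.mul_sum, ← Finset.sum_add_distrib]
  refine Finset.sum_le_sum fun i _ => Finset.sum_le_sum fun j _ => ?_
  rcases eq_or_ne i j with rfl | hij
  · calc _ ≤ c i i * a i * a i + ε * (|c' i i| * (|a i| + |a i|)) :=
          mul_mul_self_le (hle i i) (smoothAbs_nonneg ε _) (smoothAbs_le_abs hε _)
            (abs_sub_le_smoothAbs ε _)
      _ ≤ _ := by gcongr; exact (hM i i).2
  · calc _ ≤ c i j * a i * a j + ε * (|c i j| * (|a i| + |a j|)) :=
          mul_mul_le_of_nonpos (hle i j) (hcoop i j hij) (smoothAbs_nonneg ε _)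
            (smoothAbs_le_abs hε _) (abs_sub_le_smoothAbs ε _) (smoothAbs_nonneg ε _)
            (smoothAbs_le_abs hε _) (abs_sub_le_smoothAbs ε _)
      _ ≤ _ := by gcongr; exact (hM i j).1

section Gradient

variable {F : Type*} [NormedAddCommGroup F] [InnerProductSpace ℝ F] [CompleteSpace F]

lemma norm_gradient (f : F → ℝ) (x : F) : ‖gradient f x‖ = ‖fderiv ℝ f x‖ :=
  (InnerProductSpace.toDual ℝ F).symm.norm_map _

lemma ContDiff.continuous_gradient {f : F → ℝ} (hf : ContDiff ℝ 1 f) :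
    Continuous (gradient f) :=
  (InnerProductSpace.toDual ℝ F).symm.continuous.comp (hf.continuous_fderiv one_ne_zero)

lemma HasCompactSupport.gradient {f : F → ℝ} (hf : HasCompactSupport f) :
    HasCompactSupport (gradient f) :=
  (hf.fderiv ℝ).comp_left (map_zero _)

lemma norm_gradient_comp_le {f : F → ℝ} {g : ℝ → ℝ} {g' : ℝ} {x : F}
    (hf : DifferentiableAt ℝ f x) (hg : HasDerivAt g g' (f x)) (hg' : |g'| ≤ 1) :
    ‖gradient (fun y => g (f y)) x‖ ≤ ‖gradient f x‖ := by
  have hgf : HasFDerivAt (fun y => g (f y)) (g' • fderiv ℝ f x) x :=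
    hg.comp_hasFDerivAt x hf.hasFDerivAt
  rw [norm_gradient, norm_gradient, hgf.fderiv, norm_smul, norm_eq_abs]
  exact mul_le_of_le_one_left (norm_nonneg _) hg'

lemma inner_gradient_smoothAbs_le {f : F → ℝ} {ε : ℝ} {x : F} (hε : ε ≠ 0)
    (hf : DifferentiableAt ℝ f x) :
    ⟪gradient (fun y => smoothAbs ε (f y)) x, gradient (fun y => smoothAbs ε (f y)) x⟫ ≤
      ⟪gradient f x, gradient f x⟫ := by
  rw [real_inner_self_eq_norm_sq, real_inner_self_eq_norm_sq]
  exact pow_le_pow_left₀ (norm_nonneg _) (norm_gradient_comp_le hf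
    (hasDerivAt_smoothAbs hε (f x)) (abs_div_sqrt_sq_add_sq_le_one _ _)) 2

end Gradient

section TestFunctions

variable {N m : ℕ} {Ω : Set (EuclN N)} {Ψ : Fin m → EuclN N → ℝ}

namespace IsTestFun

lemma integrable_of_continuous (hΨ : IsTestFun Ω Ψ) {g : EuclN N → ℝ} (hg : Continuous g)
    (h0 : ∀ x, (∀ i, Ψ i x = 0) → g x = 0) : Integrable g := by
  refine hg.integrable_of_hasCompactSupport <|
    HasCompactSupport.intro (isCompact_iUnion fun i => (hΨ i).2.1) fun x hx => h0 x fun i => ?_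
  exact image_eq_zero_of_notMem_tsupport fun h => hx (mem_iUnion.2 ⟨i, h⟩)

lemma integrable_sum_sq (hΨ : IsTestFun Ω Ψ) : Integrable fun x => ∑ i, Ψ i x ^ 2 :=
  hΨ.integrable_of_continuous (continuous_finsetSum _ fun i _ => (hΨ i).1.continuous.pow 2)
    fun x hx => by simp [hx]

lemma integrable_inner_gradient (hΨ : IsTestFun Ω Ψ) (i : Fin m) :
    Integrable fun x => ⟪gradient (Ψ i) x, gradient (Ψ i) x⟫ :=
  ((hΨ i).1.continuous_gradient.inner (hΨ i).1.continuous_gradient).integrable_of_hasCompactSupport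
    ((hΨ i).2.1.gradient.comp_left (g := fun v => ⟪v, v⟫) (inner_zero_left _))

lemma integrableOn_bformL_integrand (hΩ : MeasurableSet Ω) {C : Fin m → Fin m → EuclN N → ℝ}
    (hmeas : ∀ i j, Measurable (C i j)) (hbdd : ∀ i j, ∃ M : ℝ, ∀ x ∈ Ω, |C i j x| ≤ M)
    (hΨ : IsTestFun Ω Ψ) :
    IntegrableOn (fun x => (∑ i, ⟪gradient (Ψ i) x, gradient (Ψ i) x⟫) +
      ∑ i, ∑ j, C i j x * Ψ i x * Ψ j x) Ω := by
  refine (integrable_finsetSum _ fun i _ => hΨ.integrable_inner_gradient i).integrableOn.add ?_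
  refine integrable_finsetSum _ fun i _ => integrable_finsetSum _ fun j _ => ?_
  obtain ⟨M, hM⟩ := hbdd i j
  have hprod : IntegrableOn (fun x => Ψ i x * Ψ j x) Ω :=
    (hΨ.integrable_of_continuous ((hΨ i).1.continuous.mul (hΨ j).1.continuous)
      fun x hx => by simp [hx i]).integrableOn
  have hCbdd : ∀ᵐ x ∂volume.restrict Ω, ‖C i j x‖ ≤ M :=
    (ae_restrict_iff' hΩ).2 (ae_of_all _ fun x hx => (norm_eq_abs _).trans_le (hM x hx))
  simpa only [mul_assoc] using hprod.bdd_mul (hmeas i j).aestronglyMeasurable hCbdd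

lemma integral_sum_sq_pos (hΨ : IsTestFun Ω Ψ) (hne : ∃ i x, Ψ i x ≠ 0) :
    0 < ∫ x in Ω, ∑ i, Ψ i x ^ 2 := by
  obtain ⟨i, x, hx⟩ := hne
  rw [setIntegral_pos_iff_support_of_nonneg_ae (ae_of_all _ fun x => by positivity)
    hΨ.integrable_sum_sq.integrableOn]
  refine ((hΨ i).1.continuous.isOpen_support.measure_pos volume ⟨x, hx⟩).trans_le
    (measure_mono fun y hy => ⟨?_, (hΨ i).2.2 (subset_tsupport _ hy)⟩)
  have hy' : 0 < Ψ i y ^ 2 := sq_pos_of_ne_zero hy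
  exact (hy'.trans_le (Finset.single_le_sum (f := fun k => Ψ k y ^ 2)
    (fun k _ => sq_nonneg _) (Finset.mem_univ i))).ne'

lemma comp_smoothAbs {ε : ℝ} (hε : 0 < ε) (hΨ : IsTestFun Ω Ψ) :
    IsTestFun Ω fun i x => smoothAbs ε (Ψ i x) := by
  intro i
  have hts : tsupport (fun x => smoothAbs ε (Ψ i x)) = tsupport (Ψ i) := by
    unfold tsupport
    congr 1
    ext x
    simp [smoothAbs_eq_zero_iff hε.le]
  refine ⟨(contDiff_smoothAbs hε.ne').comp (hΨ i).1, ?_, hts ▸ (hΨ i).2.2⟩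
  rw [HasCompactSupport, hts]
  exact (hΨ i).2.1

lemma tendsto_integral_sum_sq_smoothAbs (hΨ : IsTestFun Ω Ψ) :
    Tendsto (fun ε => ∫ x in Ω, ∑ i, smoothAbs ε (Ψ i x) ^ 2) (𝓝[>] 0)
      (𝓝 (∫ x in Ω, ∑ i, Ψ i x ^ 2)) := by
  set D := ∫ x in Ω, ∑ i, Ψ i x ^ 2
  set A := ∫ x in Ω, ∑ i, 2 * |Ψ i x|
  have hcont : ∀ i, Continuous (Ψ i) := fun i => (hΨ i).1.continuous
  have hA : Integrable fun x => ∑ i, 2 * |Ψ i x| :=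
    hΨ.integrable_of_continuous (by fun_prop) fun x hx => by simp [hx]
  have hlow : Tendsto (fun ε => D - ε * A) (𝓝[>] 0) (𝓝 D) :=
    ((by fun_prop : Continuous fun ε : ℝ => D - ε * A).tendsto' 0 D (by simp)).mono_left
      nhdsWithin_le_nhds
  refine tendsto_of_tendsto_of_tendsto_of_le_of_le' hlow tendsto_const_nhds ?_ ?_ <;>
    filter_upwards [self_mem_nhdsWithin] with ε (hε : 0 < ε)
  · calc D - ε * A = ∫ x in Ω, (∑ i, Ψ i x ^ 2 - ε * ∑ i, 2 * |Ψ i x|) := by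
          rw [integral_sub hΨ.integrable_sum_sq.integrableOn (hA.integrableOn.const_mul ε),
            integral_const_mul]
      _ ≤ _ := integral_mono (hΨ.integrable_sum_sq.integrableOn.sub (hA.integrableOn.const_mul ε))
          (hΨ.comp_smoothAbs hε).integrable_sum_sq.integrableOn fun x => by
            rw [Finset.mul_sum, ← Finset.sum_sub_distrib]
            exact Finset.sum_le_sum fun i _ => sq_sub_le_sq_smoothAbs hε.le _
  · exact integral_mono (hΨ.comp_smoothAbs hε).integrable_sum_sq.integrableOn
      hΨ.integrable_sum_sq.integrableOn
      fun x => Finset.sum_le_sum fun i _ => sq_smoothAbs_le hε.le _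

end IsTestFun

end TestFunctions

section Rayleigh

variable {N m : ℕ}

def rayleighSet (Ω' : Set (EuclN N)) (C : Fin m → Fin m → EuclN N → ℝ) : Set ℝ :=
  {r : ℝ | ∃ Ψ : Fin m → EuclN N → ℝ, IsTestFun Ω' Ψ ∧ (∃ i x, Ψ i x ≠ 0) ∧
    r = BformL Ω' C Ψ Ψ / ∫ x in Ω', ∑ i, (Ψ i x) ^ 2}

variable {Ω : Set (EuclN N)} {C : Fin m → Fin m → EuclN N → ℝ}

lemma lamOneSym_eq_sInf : lamOneSym Ω C = sInf (rayleighSet Ω C) := rfl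

lemma neg_sum_sum_mul_sum_sq_le {ι : Type*} [Fintype ι] {c M : ι → ι → ℝ}
    (hM : ∀ i j, |c i j| ≤ M i j) (θ : ι → ℝ) :
    -(∑ i, ∑ j, M i j) * ∑ k, θ k ^ 2 ≤ ∑ i, ∑ j, c i j * θ i * θ j := by
  have hθ : ∀ k, θ k ^ 2 ≤ ∑ l, θ l ^ 2 := fun k =>
    Finset.single_le_sum (f := fun l => θ l ^ 2) (fun l _ => sq_nonneg _) (Finset.mem_univ k)
  simp only [neg_mul, Finset.sum_mul, ← Finset.sum_neg_distrib]
  refine Finset.sum_le_sum fun i _ => Finset.sum_le_sum fun j _ => ?_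
  have hij : |θ i * θ j| ≤ ∑ k, θ k ^ 2 := by
    rw [abs_mul]
    nlinarith [hθ i, hθ j, sq_abs (θ i), sq_abs (θ j), sq_nonneg (|θ i| - |θ j|)]
  calc -(M i j * ∑ k, θ k ^ 2) ≤ -(|c i j| * |θ i * θ j|) :=
        neg_le_neg (mul_le_mul (hM i j) hij (abs_nonneg _) ((abs_nonneg _).trans (hM i j)))
    _ = -|c i j * θ i * θ j| := by rw [mul_assoc, abs_mul (c i j)]
    _ ≤ _ := neg_abs_le _

lemma bddBelow_rayleighSet (hΩ : MeasurableSet Ω) (hmeas : ∀ i j, Measurable (C i j))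
    (hbdd : ∀ i j, ∃ M : ℝ, ∀ x ∈ Ω, |C i j x| ≤ M) : BddBelow (rayleighSet Ω C) := by
  choose M hM using hbdd
  refine ⟨-(∑ i, ∑ j, M i j), ?_⟩
  rintro _ ⟨Ψ, hΨ, hne, rfl⟩
  rw [le_div_iff₀ (hΨ.integral_sum_sq_pos hne), ← integral_const_mul]
  refine setIntegral_mono_on (hΨ.integrable_sum_sq.integrableOn.const_mul _)
    (hΨ.integrableOn_bformL_integrand hΩ hmeas fun i j => ⟨M i j, hM i j⟩) hΩ fun x hx => ?_
  have hgrad : 0 ≤ ∑ i, ⟪gradient (Ψ i) x, gradient (Ψ i) x⟫ :=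
    Finset.sum_nonneg fun i _ => real_inner_self_nonneg
  linarith [neg_sum_sum_mul_sum_sq_le (fun i j => hM i j x hx) fun i => Ψ i x]

lemma lamOneSym_le_rayleigh (hΩ : MeasurableSet Ω) (hmeas : ∀ i j, Measurable (C i j))
    (hbdd : ∀ i j, ∃ M : ℝ, ∀ x ∈ Ω, |C i j x| ≤ M) {Ψ : Fin m → EuclN N → ℝ}
    (hΨ : IsTestFun Ω Ψ) (hne : ∃ i x, Ψ i x ≠ 0) :
    lamOneSym Ω C ≤ BformL Ω C Ψ Ψ / ∫ x in Ω, ∑ i, Ψ i x ^ 2 :=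
  csInf_le (bddBelow_rayleighSet hΩ hmeas hbdd) ⟨Ψ, hΨ, hne, rfl⟩

end Rayleigh

section Comparison

variable {N m : ℕ} {Ω : Set (EuclN N)} {C C' : Fin m → Fin m → EuclN N → ℝ}
  {Ψ : Fin m → EuclN N → ℝ}

lemma bformL_comp_smoothAbs_le (hΩ : MeasurableSet Ω) (hmeas : ∀ i j, Measurable (C i j))
    (hmeas' : ∀ i j, Measurable (C' i j)) {M : Fin m → Fin m → ℝ}
    (hM : ∀ i j, ∀ x ∈ Ω, |C i j x| ≤ M i j ∧ |C' i j x| ≤ M i j) (hcoop : LinCoop Ω C)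
    (hge : ∀ i j, ∀ᵐ x ∂(volume : Measure (EuclN N)), x ∈ Ω → C' i j x ≤ C i j x)
    (hΨ : IsTestFun Ω Ψ) {ε : ℝ} (hε : 0 < ε) :
    BformL Ω C' (fun i x => smoothAbs ε (Ψ i x)) (fun i x => smoothAbs ε (Ψ i x)) ≤
      BformL Ω C Ψ Ψ + ε * ∫ x in Ω, ∑ i, ∑ j, M i j * (|Ψ i x| + |Ψ j x|) := by
  have hcoop' : ∀ i j, ∀ᵐ x ∂(volume : Measure (EuclN N)), x ∈ Ω → i ≠ j → C i j x ≤ 0 := by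
    intro i j
    rcases eq_or_ne i j with rfl | hij
    · exact ae_of_all _ fun _ _ h => (h rfl).elim
    · filter_upwards [hcoop i j hij] with x hx hxΩ _ using hx hxΩ
  have hae : ∀ᵐ x ∂volume.restrict Ω,
      x ∈ Ω ∧ ∀ i j, C' i j x ≤ C i j x ∧ (i ≠ j → C i j x ≤ 0) := by
    rw [ae_restrict_iff' hΩ]
    filter_upwards [ae_all_iff.2 fun i => ae_all_iff.2 (hge i),
      ae_all_iff.2 fun i => ae_all_iff.2 (hcoop' i)] with x hle hc hx
    exact ⟨hx, fun i j => ⟨hle i j hx, hc i j hx⟩⟩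
  have hcont : ∀ i, Continuous (Ψ i) := fun i => (hΨ i).1.continuous
  have hE : Integrable fun x => ∑ i, ∑ j, M i j * (|Ψ i x| + |Ψ j x|) :=
    hΨ.integrable_of_continuous (by fun_prop) fun x hx => by simp [hx]
  have hB := hΨ.integrableOn_bformL_integrand hΩ hmeas
    fun i j => ⟨M i j, fun x hx => (hM i j x hx).1⟩
  calc _ ≤ ∫ x in Ω, (((∑ i, ⟪gradient (Ψ i) x, gradient (Ψ i) x⟫) +
        ∑ i, ∑ j, C i j x * Ψ i x * Ψ j x) + ε * ∑ i, ∑ j, M i j * (|Ψ i x| + |Ψ j x|)) := by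
        refine integral_mono_ae ((hΨ.comp_smoothAbs hε).integrableOn_bformL_integrand hΩ hmeas'
          fun i j => ⟨M i j, fun x hx => (hM i j x hx).2⟩) (hB.add (hE.integrableOn.const_mul ε))
          (hae.mono fun x ⟨hx, hC⟩ => ?_)
        have hgrad := Finset.sum_le_sum fun i (_ : i ∈ Finset.univ) =>
          inner_gradient_smoothAbs_le hε.ne' ((hΨ i).1.differentiable one_ne_zero x)
        have hcoef := sum_sum_mul_smoothAbs_le hε.le (fun i j => (hC i j).1)
          (fun i j => (hC i j).2) (fun i j => hM i j x hx) fun i => Ψ i x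
        dsimp only
        linarith
    _ = _ := by rw [integral_add hB (hE.integrableOn.const_mul ε), integral_const_mul]; rfl

lemma lamOneSym_le_rayleigh_of_coeff_le (hΩ : MeasurableSet Ω)
    (hmeas : ∀ i j, Measurable (C i j)) (hmeas' : ∀ i j, Measurable (C' i j))
    (hbdd : ∀ i j, ∃ M : ℝ, ∀ x ∈ Ω, |C i j x| ≤ M)
    (hbdd' : ∀ i j, ∃ M : ℝ, ∀ x ∈ Ω, |C' i j x| ≤ M) (hcoop : LinCoop Ω C)
    (hge : ∀ i j, ∀ᵐ x ∂(volume : Measure (EuclN N)), x ∈ Ω → C' i j x ≤ C i j x)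
    (hΨ : IsTestFun Ω Ψ) (hne : ∃ i x, Ψ i x ≠ 0) :
    lamOneSym Ω C' ≤ BformL Ω C Ψ Ψ / ∫ x in Ω, ∑ i, Ψ i x ^ 2 := by
  choose M hM using hbdd
  choose M' hM' using hbdd'
  have hK : ∀ i j, ∀ x ∈ Ω, |C i j x| ≤ max (M i j) (M' i j) ∧ |C' i j x| ≤ max (M i j) (M' i j) :=
    fun i j x hx => ⟨(hM i j x hx).trans (le_max_left _ _), (hM' i j x hx).trans (le_max_right _ _)⟩
  set B := BformL Ω C Ψ Ψ
  set Q := ∫ x in Ω, ∑ i, ∑ j, max (M i j) (M' i j) * (|Ψ i x| + |Ψ j x|)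
  have hnum : Tendsto (fun ε => B + ε * Q) (𝓝[>] 0) (𝓝 B) :=
    ((by fun_prop : Continuous fun ε : ℝ => B + ε * Q).tendsto' 0 B (by simp)).mono_left
      nhdsWithin_le_nhds
  refine ge_of_tendsto (hnum.div hΨ.tendsto_integral_sum_sq_smoothAbs
    (hΨ.integral_sum_sq_pos hne).ne') (eventually_nhdsWithin_of_forall fun ε (hε : 0 < ε) => ?_)
  have hΦ := hΨ.comp_smoothAbs hε
  obtain ⟨i, x, hx⟩ := hne
  have hΦne : ∃ i x, smoothAbs ε (Ψ i x) ≠ 0 := ⟨i, x, (smoothAbs_eq_zero_iff hε.le).not.2 hx⟩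
  calc lamOneSym Ω C' ≤ _ :=
        lamOneSym_le_rayleigh hΩ hmeas' (fun i j => ⟨M' i j, hM' i j⟩) hΦ hΦne
    _ ≤ _ := div_le_div_of_nonneg_right
        (bformL_comp_smoothAbs_le hΩ hmeas hmeas' hK hcoop hge hΨ hε)
        (hΦ.integral_sum_sq_pos hΦne).le

theorem lamOneSym_le_of_coeff_le (hΩ : MeasurableSet Ω)
    (hmeas : ∀ i j, Measurable (C i j)) (hmeas' : ∀ i j, Measurable (C' i j))
    (hbdd : ∀ i j, ∃ M : ℝ, ∀ x ∈ Ω, |C i j x| ≤ M)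
    (hbdd' : ∀ i j, ∃ M : ℝ, ∀ x ∈ Ω, |C' i j x| ≤ M) (hcoop : LinCoop Ω C)
    (hge : ∀ i j, ∀ᵐ x ∂(volume : Measure (EuclN N)), x ∈ Ω → C' i j x ≤ C i j x) :
    lamOneSym Ω C' ≤ lamOneSym Ω C := by
  rcases (rayleighSet Ω C).eq_empty_or_nonempty with hS | hS
  · -- no nonzero test function: both infima are the junk value `sInf ∅ = 0`
    have hS' : rayleighSet Ω C' = ∅ :=
      eq_empty_of_forall_notMem fun _ ⟨Ψ, hΨ, hne, _⟩ => hS.subset ⟨Ψ, hΨ, hne, rfl⟩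
    rw [lamOneSym_eq_sInf, lamOneSym_eq_sInf, hS, hS']
  · refine le_csInf hS fun _ ⟨Ψ, hΨ, hne, hr⟩ => hr ▸ ?_
    exact lamOneSym_le_rayleigh_of_coeff_le hΩ hmeas hmeas' hbdd hbdd' hcoop hge hΨ hne

end Comparison

end

theorem statement12_general
    {N m : ℕ}
    (Ω : Set (EuclN N)) (hΩo : IsOpen Ω)
    (C C' : Fin m → Fin m → EuclN N → ℝ)
    (hmeas : ∀ i j, Measurable (C i j)) (hmeas' : ∀ i j, Measurable (C' i j))
    (hbdd : ∀ i j, ∃ M : ℝ, ∀ x ∈ Ω, |C i j x| ≤ M)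
    (hbdd' : ∀ i j, ∃ M : ℝ, ∀ x ∈ Ω, |C' i j x| ≤ M)
    (hfull : LinFullyCoupled Ω C)
    (hge : ∀ i j, ∀ᵐ x ∂(volume : Measure (EuclN N)), x ∈ Ω → C' i j x ≤ C i j x) :
    lamOneSym Ω C' ≤ lamOneSym Ω C :=
  lamOneSym_le_of_coeff_le hΩo.measurableSet hmeas hmeas' hbdd hbdd' hfull.1 hge

/-- **Monotonicity of the first eigenvalue with respect to the coefficients.** -/
theorem statement12
    {N m : ℕ} (hN : 2 ≤ N)
    (Ω : Set (EuclN N)) (hΩo : IsOpen Ω) (hΩb : Bornology.IsBounded Ω)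
    (C C' : Fin m → Fin m → EuclN N → ℝ)
    (hmeas : ∀ i j, Measurable (C i j)) (hmeas' : ∀ i j, Measurable (C' i j))
    (hbdd : ∀ i j, ∃ M : ℝ, ∀ x ∈ Ω, |C i j x| ≤ M)
    (hbdd' : ∀ i j, ∃ M : ℝ, ∀ x ∈ Ω, |C' i j x| ≤ M)
    (hsymm : ∀ i j, ∀ᵐ x ∂(volume : Measure (EuclN N)), x ∈ Ω → C i j x = C j i x)
    (hsymm' : ∀ i j, ∀ᵐ x ∂(volume : Measure (EuclN N)), x ∈ Ω → C' i j x = C' j i x)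
    (hfull : LinFullyCoupled Ω C)
    (hge : ∀ i j, ∀ᵐ x ∂(volume : Measure (EuclN N)), x ∈ Ω → C' i j x ≤ C i j x)
    (W₁ : Fin m → EuclN N → ℝ)
    (hWreg : ∀ i, ContDiffOn ℝ 1 (W₁ i) (closure Ω))
    (hWbd : ∀ i, ∀ x ∈ frontier Ω, W₁ i x = 0)
    (hWne : ∃ i, ∃ x ∈ Ω, W₁ i x ≠ 0)
    (heig : ∀ V : Fin m → EuclN N → ℝ, IsTestFun Ω V →
      BformL Ω C W₁ V = lamOneSym Ω C * ∫ x in Ω, ∑ i, W₁ i x * V i x) :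
    lamOneSym Ω C' ≤ lamOneSym Ω C :=
  statement12_general Ω hΩo C C' hmeas hmeas' hbdd hbdd' hfull hge
end

section
/- (Linear system satisfied by the reflected difference.) Let Ω be an open ball or annulus centered at the origin in ℝ^N, N ≥ 2, and let U ∈ C²(Ω̄;ℝ^m) solve −Δu_i = f_i(|x|,U) in Ω, u_i = 0 on ∂Ω, where F satisfies: (i) the system is fully coupled along U in Ω(e) for every e ∈ S^{N−1}; (ii) each (∂f_i/∂u_j)(|x|,u_1,…,u_m) is nondecreasing in each variable u_k; (iii) if m ≥ 3, each f_i(|x|,u_1,…,u_m) = Σ_{k≠i} g_{ik}(|x|,u_i,u_k) with g_{ik} ∈ C^{1,α}. Then for every direction e ∈ S^{N−1} there exists a continuous matrix-valued function B_e = (b_ij) : Ω → ℝ^{m×m} such that the difference W^e = U − U^{σ_e} = (w_1,…,w_m) satisfies −Δw_i + Σ_j b_ij(x) w_j = 0 in Ω for every i, with the following properties for all i,j and x ∈ Ω: b_ij(x) ≤ 0 whenever i ≠ j; b_ii(x) ≥ −(∂f_i/∂u_i)(|x|,U(x)) whenever u_i(x) ≥ u_i^{σ_e}(x); for i ≠ j,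 b_ij(x) ≥ −(∂f_i/∂u_j)(|x|,U(x)) whenever u_i(x) ≥ u_i^{σ_e}(x) and u_j(x) ≥ u_j^{σ_e}(x); and b_ij(x) = −(∂f_i/∂u_j)(|x|,U(x)) whenever u_i(x) = u_i^{σ_e}(x) and u_j(x) = u_j^{σ_e}(x). Moreover the linear system −ΔW + B_e(x)W = 0 is fully coupled in Ω(e), i.e. for every partition of {1,…,m} into nonempty disjoint sets I, J there exist i₀ ∈ I, j₀ ∈ J with meas({x ∈ Ω(e) : b_{i₀j₀}(x) < 0}) > 0. -/
open MeasureTheory Real Set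
open scoped RealInnerProductSpace ENNReal

/-!
Subtracting the equations at `x` and at `σ_e x` (an isometry, so it commutes with `Δ` and preserves
`|x|`) gives `-Δw_i = f_i(|x|, U) - f_i(|x|, U^σ)`. Since `f_i` is a sum of functions of
`(u_i, u_k)` (automatically so when `m = 2`), this difference telescopes along the staircase
`U → (U with u_i replaced by u_i^σ) → U^σ`, one coordinate at a time, and the fundamental theorem of
calculus on each segment writes it as `∑_j c_ij w_j`, `c_ij = ∫₀¹ ∂f_i/∂u_j` along the segment;
take `b_ij = -c_ij`. Cooperativity gives `c_ij ≥ 0`; where the staircase stays below `U`,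
monotonicity of `∂f_i/∂u_j` bounds `c_ij` by its value at `U`; and since the segment for `c_ij`
starts at `U(σ_e x)` in the two coordinates `∂f_i/∂u_j` depends on, full coupling of `F` on `Ω(-e)`
reflects to full coupling of `B_e` on `Ω(e)`.
-/

open Function Finset

section MeanValue

variable {ι : Type*} [Fintype ι] [DecidableEq ι] {φ : (ι → ℝ) → ℝ}

theorem hasDerivAt_comp_update {y : ι → ℝ} {j : ι} {u : ℝ}
    (hφ : DifferentiableAt ℝ φ (update y j u)) :
    HasDerivAt (fun v => φ (update y j v)) (fderiv ℝ φ (update y j u) (Pi.single j 1)) u :=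
  hφ.hasFDerivAt.comp_hasDerivAt u (hasDerivAt_update y j u)

theorem sub_eq_integral_fderiv_update_mul (hφ : ContDiff ℝ 1 φ) (y : ι → ℝ) (j : ι)
    (b c : ℝ) :
    φ (update y j b) - φ (update y j c) =
      (∫ l in (0:ℝ)..1, fderiv ℝ φ (update y j (c + l * (b - c))) (Pi.single j 1)) * (b - c) := by
  have hline : ∀ l : ℝ, HasDerivAt (fun l : ℝ => c + l * (b - c)) (b - c) l := fun l => by
    simpa using ((hasDerivAt_id l).mul_const (b - c)).const_add c
  have hderiv : ∀ l ∈ uIcc (0:ℝ) 1, HasDerivAt (fun l => φ (update y j (c + l * (b - c))))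
      (fderiv ℝ φ (update y j (c + l * (b - c))) (Pi.single j 1) * (b - c)) l := fun l _ =>
    (hasDerivAt_comp_update (hφ.differentiable one_ne_zero _)).comp l (hline l)
  have hcont : Continuous fun l : ℝ =>
      fderiv ℝ φ (update y j (c + l * (b - c))) (Pi.single j 1) * (b - c) :=
    (((hφ.continuous_fderiv one_ne_zero).comp (by fun_prop)).clm_apply
      continuous_const).mul_const _
  rw [← intervalIntegral.integral_mul_const,
    intervalIntegral.integral_eq_sub_of_hasDerivAt hderiv (hcont.intervalIntegrable _ _)]
  simp

theorem intervalIntegral_pos_of_continuous_of_nonneg {h : ℝ → ℝ} (hc : Continuous h)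
    (hnn : ∀ l, 0 ≤ h l) {a b : ℝ} (hab : a < b) (ha : 0 < h a) : 0 < ∫ l in a..b, h l := by
  rw [intervalIntegral.integral_pos_iff_support_of_nonneg_ae (ae_of_all _ hnn)
    (hc.intervalIntegrable _ _)]
  refine ⟨hab, lt_of_lt_of_le ?_
    (measure_mono (inter_subset_inter_right _ Ioo_subset_Ioc_self))⟩
  have hmem : a ∈ closure (Ioo a b) := by
    rw [closure_Ioo hab.ne]; exact left_mem_Icc.2 hab.le
  exact (hc.isOpen_support.inter isOpen_Ioo).measure_pos _
    (mem_closure_iff.1 hmem _ hc.isOpen_support ha.ne')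

def PairwiseSplit (φ : (ι → ℝ) → ℝ) (i : ι) : Prop :=
  ∃ G : ι → ℝ → ℝ → ℝ, ∀ y, φ y = ∑ k ∈ univ.erase i, G k (y i) (y k)

theorem sub_update_eq_of_eq_sum {i j : ι} {G : ι → ℝ → ℝ → ℝ}
    (hG : ∀ y, φ y = ∑ k ∈ univ.erase i, G k (y i) (y k)) (hj : j ≠ i) (z : ι → ℝ) (b : ℝ) :
    φ z - φ (update z j b) = G j (z i) (z j) - G j (z i) b := by
  rw [hG, hG, ← sum_sub_distrib, sum_eq_single_of_mem j (mem_erase.2 ⟨hj, mem_univ j⟩)]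
  · simp [update_of_ne hj.symm]
  · intro k _ hkj
    simp [update_of_ne hj.symm, update_of_ne hkj]

theorem pairwiseSplit_of_card_eq_two (h : Fintype.card ι = 2) (φ : (ι → ℝ) → ℝ) (i : ι) :
    PairwiseSplit φ i := by
  obtain ⟨k₀, hk₀⟩ : ∃ k₀, univ.erase i = {k₀} :=
    card_eq_one.1 (by rw [card_erase_of_mem (mem_univ i), card_univ, h])
  refine ⟨fun _ a b => φ (update (fun _ => b) i a), fun y => ?_⟩
  rw [hk₀, sum_singleton]
  congr 1
  funext k
  rcases eq_or_ne k i with rfl | hk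
  · simp
  · obtain rfl : k = k₀ := mem_singleton.1 (hk₀ ▸ mem_erase.2 ⟨hk, mem_univ k⟩)
    simp [update_of_ne hk]

namespace PairwiseSplit

variable {i : ι}

theorem sub_eq_sum_sub_update (h : PairwiseSplit φ i) {y t : ι → ℝ} (hy : y i = t i) :
    φ y - φ t = ∑ j ∈ univ.erase i, (φ y - φ (update y j (t j))) := by
  obtain ⟨G, hG⟩ := h
  rw [sum_congr rfl fun j hj => sub_update_eq_of_eq_sum hG (ne_of_mem_erase hj) y (t j),
    hG y, hG t, ← sum_sub_distrib, hy]

theorem update_sub_congr (h : PairwiseSplit φ i) {j : ι} (hj : j ≠ i) {z z' : ι → ℝ}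
    (hi : z i = z' i) (hjj : z j = z' j) (b : ℝ) :
    φ (update z j b) - φ z = φ (update z' j b) - φ z' := by
  obtain ⟨G, hG⟩ := h
  rw [← neg_sub, sub_update_eq_of_eq_sum hG hj, ← neg_sub (φ z'),
    sub_update_eq_of_eq_sum hG hj, hi, hjj]

theorem fderiv_single_congr (h : PairwiseSplit φ i) (hφ : Differentiable ℝ φ) {j : ι}
    (hj : j ≠ i) {y y' : ι → ℝ} (hi : y i = y' i) (hjj : y j = y' j) :
    fderiv ℝ φ y (Pi.single j 1) = fderiv ℝ φ y' (Pi.single j 1) := by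
  have hy := hasDerivAt_comp_update (y := y) (j := j) (u := y j) (hφ _)
  have hy' := (hasDerivAt_comp_update (y := y') (j := j) (u := y' j) (hφ _)).add_const
    (φ y - φ y')
  rw [update_eq_self] at hy hy'
  rw [← hjj] at hy'
  refine hy.unique (hy'.congr_of_eventuallyEq (Filter.Eventually.of_forall fun v => ?_))
  show φ (update y j v) = φ (update y' j v) + (φ y - φ y')
  linarith [h.update_sub_congr hj hi hjj v]

end PairwiseSplit

end MeanValue

section MeanValueCoeff

def mvPath {ι : Type*} [DecidableEq ι] (i j : ι) (s t : ι → ℝ) (l : ℝ) : ι → ℝ :=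
  update (update s i (t i)) j (t j + l * (s j - t j))

@[fun_prop]
theorem Continuous.mvPath {ι X : Type*} [DecidableEq ι] [TopologicalSpace X] (i j : ι)
    {s t : X → ι → ℝ} {l : X → ℝ} (hs : Continuous s) (ht : Continuous t) (hl : Continuous l) :
    Continuous fun x => mvPath i j (s x) (t x) (l x) := by
  unfold _root_.mvPath; fun_prop

theorem mvPath_le {ι : Type*} [DecidableEq ι] {i j : ι} {s t : ι → ℝ} (hi : t i ≤ s i)
    (hj : t j ≤ s j) {l : ℝ} (hl : l ∈ Icc (0:ℝ) 1) (k : ι) : mvPath i j s t l k ≤ s k := by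
  simp only [mvPath, update_apply]
  split_ifs with hkj hki
  · subst hkj; nlinarith [hl.1, hl.2]
  · exact hki ▸ hi
  · exact le_rfl

theorem mvPath_of_eq {ι : Type*} [DecidableEq ι] {i j : ι} {s t : ι → ℝ} (hi : s i = t i)
    (hj : s j = t j) (l : ℝ) : mvPath i j s t l = s := by
  rw [mvPath, ← hi, update_eq_self, ← hj, sub_self, mul_zero, add_zero, update_eq_self]

variable {m : ℕ} (f : ℝ → (Fin m → ℝ) → ℝ)

noncomputable def mvCoeff (i j : Fin m) (r : ℝ) (s t : Fin m → ℝ) : ℝ :=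
  ∫ l in (0:ℝ)..1, pd f j r (mvPath i j s t l)

variable {f}

theorem contDiff_slice (hf : ContDiff ℝ 1 fun q : ℝ × (Fin m → ℝ) => f q.1 q.2) (r : ℝ) :
    ContDiff ℝ 1 (f r) :=
  hf.comp (contDiff_const.prodMk contDiff_id)

theorem Continuous.pd (hf : ContDiff ℝ 1 fun q : ℝ × (Fin m → ℝ) => f q.1 q.2) (j : Fin m)
    {X : Type*} [TopologicalSpace X] {r : X → ℝ} {s : X → Fin m → ℝ} (hr : Continuous r)
    (hs : Continuous s) : Continuous fun x => pd f j (r x) (s x) :=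
  ((Continuous.fderiv (f := fun q : ℝ × (Fin m → ℝ) => f q.1)
    (hf.comp (contDiff_fst.fst.prodMk contDiff_snd)) continuous_snd le_rfl).clm_apply
    continuous_const).comp (hr.prodMk hs)

theorem continuous_mvCoeff (hf : ContDiff ℝ 1 fun q : ℝ × (Fin m → ℝ) => f q.1 q.2)
    (i j : Fin m) :
    Continuous fun p : ℝ × (Fin m → ℝ) × (Fin m → ℝ) => mvCoeff f i j p.1 p.2.1 p.2.2 := by
  have h : Continuous (uncurry fun (p : ℝ × (Fin m → ℝ) × (Fin m → ℝ)) (l : ℝ) =>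
      pd f j p.1 (mvPath i j p.2.1 p.2.2 l)) :=
    Continuous.pd hf j (by fun_prop) (by fun_prop)
  exact intervalIntegral.continuous_parametric_intervalIntegral_of_continuous' h 0 1

theorem sub_eq_sum_mvCoeff_mul (hf : ContDiff ℝ 1 fun q : ℝ × (Fin m → ℝ) => f q.1 q.2)
    {i : Fin m} {r : ℝ} (hsplit : PairwiseSplit (f r) i) (s t : Fin m → ℝ) :
    f r s - f r t = ∑ j, mvCoeff f i j r s t * (s j - t j) := by
  set a := update s i (t i)
  have hterm : ∀ j, mvCoeff f i j r s t * (s j - t j) =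
      f r (update a j (s j)) - f r (update a j (t j)) := fun j =>
    (sub_eq_integral_fderiv_update_mul (contDiff_slice hf r) a j (s j) (t j)).symm
  have hoff : ∀ j ∈ univ.erase i, update a j (s j) = a := fun j hj => by
    simp [a, update_of_ne (ne_of_mem_erase hj)]
  rw [← add_sum_erase _ _ (mem_univ i), hterm,
    sum_congr rfl fun j hj => by rw [hterm, hoff j hj],
    ← hsplit.sub_eq_sum_sub_update (update_self i (t i) s)]
  simp [a]

theorem mvCoeff_nonneg {i j : Fin m} {r : ℝ} (hcoop : ∀ y, 0 ≤ pd f j r y) (s t : Fin m → ℝ) :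
    0 ≤ mvCoeff f i j r s t :=
  intervalIntegral.integral_nonneg zero_le_one fun _ _ => hcoop _

theorem mvCoeff_le_pd (hf : ContDiff ℝ 1 fun q : ℝ × (Fin m → ℝ) => f q.1 q.2) {i j : Fin m}
    {r : ℝ} (hmono : ∀ y z : Fin m → ℝ, (∀ k, y k ≤ z k) → pd f j r y ≤ pd f j r z)
    {s t : Fin m → ℝ} (hi : t i ≤ s i) (hj : t j ≤ s j) : mvCoeff f i j r s t ≤ pd f j r s := by
  have : mvCoeff f i j r s t ≤ ∫ _ in (0:ℝ)..1, pd f j r s :=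
    intervalIntegral.integral_mono_on zero_le_one
    ((Continuous.pd hf j continuous_const (by fun_prop)).intervalIntegrable 0 1)
    (intervalIntegrable_const (μ := volume)) fun l hl => hmono _ _ (mvPath_le hi hj hl)
  simpa using this

theorem mvCoeff_of_eq {i j : Fin m} {r : ℝ} {s t : Fin m → ℝ} (hi : s i = t i)
    (hj : s j = t j) : mvCoeff f i j r s t = pd f j r s := by
  simp [mvCoeff, mvPath_of_eq hi hj]

/-- For split `f r`, `∂f/∂u_j` only sees the coordinates `i` and `j`, where `mvPath` starts
at `t`. -/
theorem mvCoeff_pos (hf : ContDiff ℝ 1 fun q : ℝ × (Fin m → ℝ) => f q.1 q.2) {i j : Fin m}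
    (hij : i ≠ j) {r : ℝ} (hsplit : PairwiseSplit (f r) i) (hcoop : ∀ y, 0 ≤ pd f j r y)
    {s t : Fin m → ℝ} (ht : 0 < pd f j r t) : 0 < mvCoeff f i j r s t := by
  refine intervalIntegral_pos_of_continuous_of_nonneg
    (Continuous.pd hf j continuous_const (by fun_prop)) (fun _ => hcoop _) zero_lt_one ?_
  rwa [pd, hsplit.fderiv_single_congr ((contDiff_slice hf r).differentiable one_ne_zero) hij.symm
    (y' := t) (by simp [mvPath, update_of_ne hij]) (by simp [mvPath])]

end MeanValueCoeff

section Reflection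

open InnerProductSpace Laplacian

variable {N : ℕ} {e : EuclN N}

theorem reflPt_eq_reflection (he : ‖e‖ = 1) (x : EuclN N) :
    reflPt e x = (ℝ ∙ e)ᗮ.reflection x := by
  rw [Submodule.reflection_orthogonal_apply, Submodule.reflection_singleton_apply, he, reflPt,
    real_inner_comm]
  simp only [RCLike.ofReal_real_eq_id, id, one_pow, div_one]
  module

theorem norm_reflPt (he : ‖e‖ = 1) (x : EuclN N) : ‖reflPt e x‖ = ‖x‖ := by
  rw [reflPt_eq_reflection he, LinearIsometryEquiv.norm_map]

theorem inner_reflPt_self (he : ‖e‖ = 1) (x : EuclN N) : ⟪reflPt e x, e⟫ = -⟪x, e⟫ := by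
  rw [reflPt, inner_sub_left, real_inner_smul_left, real_inner_self_eq_norm_sq, he]
  ring

theorem continuous_reflPt : Continuous (reflPt e) := by
  unfold reflPt; fun_prop

theorem volume_preimage_reflPt (he : ‖e‖ = 1) (A : Set (EuclN N)) :
    volume (reflPt e ⁻¹' A) = volume A := by
  rw [show reflPt e = (ℝ ∙ e)ᗮ.reflection.toMeasurableEquiv from
    funext (reflPt_eq_reflection he)]
  exact (ℝ ∙ e)ᗮ.reflection.measurePreserving.measure_preimage_equiv A

theorem lap_eq_laplacian (u : EuclN N → ℝ) : lap u = Δ u := by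
  ext x
  simp [lap, laplacian_eq_iteratedFDeriv_orthonormalBasis u (EuclideanSpace.basisFun (Fin N) ℝ)]

theorem laplacian_comp_linearIsometryEquiv {E F : Type*} [NormedAddCommGroup E]
    [InnerProductSpace ℝ E] [FiniteDimensional ℝ E] [NormedAddCommGroup F] [NormedSpace ℝ F]
    (L : E ≃ₗᵢ[ℝ] E) (u : E → F) (x : E) : Δ (u ∘ L) x = Δ u (L x) := by
  let v := stdOrthonormalBasis ℝ E
  rw [laplacian_eq_iteratedFDeriv_orthonormalBasis (u ∘ L) v,
    laplacian_eq_iteratedFDeriv_orthonormalBasis u (v.map L)]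
  refine sum_congr rfl fun i _ => ?_
  have h := L.toContinuousLinearEquiv.iteratedFDerivWithin_comp_right u uniqueDiffOn_univ
    (mem_univ (L x)) 2
  simp only [iteratedFDerivWithin_univ, preimage_univ,
    LinearIsometryEquiv.coe_toContinuousLinearEquiv] at h
  rw [h, OrthonormalBasis.map_apply, ContinuousMultilinearMap.compContinuousLinearMap_apply]
  congr 1
  ext k
  fin_cases k <;> rfl

theorem lap_sub_comp_reflPt (he : ‖e‖ = 1) {u : EuclN N → ℝ} {x : EuclN N}
    (hu : ContDiffAt ℝ 2 u x) (hu' : ContDiffAt ℝ 2 u (reflPt e x)) :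
    lap (fun y => u y - u (reflPt e y)) x = lap u x - lap u (reflPt e x) := by
  set L := (ℝ ∙ e)ᗮ.reflection
  have hw : (fun y => u y - u (reflPt e y)) = u - u ∘ L :=
    funext fun y => by simp [L, reflPt_eq_reflection he]
  rw [reflPt_eq_reflection he] at hu' ⊢
  rw [lap_eq_laplacian, lap_eq_laplacian, hw, ← laplacian_comp_linearIsometryEquiv]
  exact hu.laplacian_sub (hu'.comp x L.contDiff.contDiffAt)

end Reflection

section Domain

variable {N : ℕ} {Ω : Set (EuclN N)}

theorem IsBallOrAnnulus.isOpen (hΩ : IsBallOrAnnulus Ω) : IsOpen Ω := by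
  rcases hΩ with ⟨R, -, rfl⟩ | ⟨r, R, -, -, rfl⟩
  · exact Metric.isOpen_ball
  · exact (isOpen_lt continuous_const continuous_norm).inter
      (isOpen_lt continuous_norm continuous_const)

theorem IsBallOrAnnulus.mem_of_norm_eq (hΩ : IsBallOrAnnulus Ω) {x y : EuclN N} (hx : x ∈ Ω)
    (h : ‖y‖ = ‖x‖) : y ∈ Ω := by
  rcases hΩ with ⟨R, -, rfl⟩ | ⟨r, R, -, -, rfl⟩
  · rw [mem_ball_zero_iff] at hx ⊢; rwa [h]
  · exact ⟨h ▸ hx.1, h ▸ hx.2⟩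

theorem IsBallOrAnnulus.volume_halfDom_pos_of_neg (hΩ : IsBallOrAnnulus Ω) {e : EuclN N}
    (he : ‖e‖ = 1) {P : EuclN N → Prop} (hP : 0 < volume {x ∈ halfDom Ω (-e) | P x}) :
    0 < volume {x ∈ halfDom Ω e | P (reflPt e x)} := by
  rw [← volume_preimage_reflPt he] at hP
  refine hP.trans_le (measure_mono fun x ⟨⟨hxΩ, hxe⟩, hPx⟩ => ⟨⟨?_, ?_⟩, hPx⟩)
  · exact hΩ.mem_of_norm_eq hxΩ (norm_reflPt he x).symm
  · rwa [inner_neg_right, inner_reflPt_self he, neg_neg] at hxe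

/-- Cooperativity only depends on `‖x‖`, and every radius of `Ω` is a limit of radii of points
off the origin, each of which lies in some `Ω(e)`. -/
theorem CoopAlong.of_forall_halfDom {m : ℕ} {f : Fin m → ℝ → (Fin m → ℝ) → ℝ}
    (hf : ∀ i, ContDiff ℝ 1 fun q : ℝ × (Fin m → ℝ) => f i q.1 q.2) (hN : 0 < N)
    (hΩ : IsOpen Ω) (h : ∀ e : EuclN N, ‖e‖ = 1 → CoopAlong f (halfDom Ω e)) :
    CoopAlong f Ω := by
  intro i j hij x hx s
  have hclosed : IsClosed {y : EuclN N | 0 ≤ pd (f i) j ‖y‖ s} :=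
    isClosed_le continuous_const (Continuous.pd (hf i) j continuous_norm continuous_const)
  have hoff : Ω ∩ {0}ᶜ ⊆ {y : EuclN N | 0 ≤ pd (f i) j ‖y‖ s} := fun y ⟨hy, hy0⟩ => by
    have hpos : 0 < ‖y‖ := norm_pos_iff.2 hy0
    refine h _ (norm_smul_inv_norm (𝕜 := ℝ) hy0) i j hij y ⟨hy, ?_⟩ s
    rw [real_inner_smul_right, real_inner_self_eq_norm_sq]
    positivity
  have : Nonempty (Fin N) := ⟨⟨0, hN⟩⟩
  exact hclosed.closure_subset_iff.2 hoff
    (hΩ.inter_closure ⟨hx, by rw [closure_compl_singleton]; trivial⟩)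

end Domain

theorem IsSolution.neg_lap_sub_reflPt {N m : ℕ} {Ω : Set (EuclN N)}
    {f : Fin m → ℝ → (Fin m → ℝ) → ℝ} {U : Fin m → EuclN N → ℝ} (hsol : IsSolution Ω f U)
    (hΩ : IsBallOrAnnulus Ω) (hU : ∀ i, ContDiffOn ℝ 2 (U i) Ω) {e : EuclN N} (he : ‖e‖ = 1)
    {i : Fin m} {x : EuclN N} (hx : x ∈ Ω) :
    -lap (fun y => U i y - U i (reflPt e y)) x =
      f i ‖x‖ (fun k => U k x) - f i ‖x‖ (fun k => U k (reflPt e x)) := by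
  have hσx : reflPt e x ∈ Ω := hΩ.mem_of_norm_eq hx (norm_reflPt he x)
  have hσsol := hsol.1 i _ hσx
  rw [norm_reflPt he] at hσsol
  rw [lap_sub_comp_reflPt he ((hU i).contDiffAt (hΩ.isOpen.mem_nhds hx))
    ((hU i).contDiffAt (hΩ.isOpen.mem_nhds hσx)), ← hsol.1 i x hx, ← hσsol]
  ring

/-- **The difference between a solution and its reflection satisfies a fully coupled
cooperative linear system.** -/
theorem statement15
    {N m : ℕ} (hN : 2 ≤ N) (hm : 2 ≤ m)
    (Ω : Set (EuclN N)) (hΩ : IsBallOrAnnulus Ω)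
    (f : Fin m → ℝ → (Fin m → ℝ) → ℝ)
    (hf : ∀ i, ContDiff ℝ 1 (fun q : ℝ × (Fin m → ℝ) => f i q.1 q.2))
    (U : Fin m → EuclN N → ℝ)
    (hUreg : ∀ i, ContDiffOn ℝ 2 (U i) (closure Ω))
    (hsol : IsSolution Ω f U)
    (hcoup : ∀ e : EuclN N, ‖e‖ = 1 → FullyCoupledAlong f U (halfDom Ω e))
    (hmono : ∀ i j (r : ℝ) (s t : Fin m → ℝ), (∀ k, s k ≤ t k) →
      pd (f i) j r s ≤ pd (f i) j r t)
    (hdecomp : 3 ≤ m → ∀ i, ∃ g : Fin m → ℝ → ℝ → ℝ → ℝ,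
      (∀ k, ContDiff ℝ 1 (fun q : ℝ × ℝ × ℝ => g k q.1 q.2.1 q.2.2)) ∧
      ∀ (r : ℝ) (s : Fin m → ℝ), f i r s = ∑ k ∈ Finset.univ.erase i, g k r (s i) (s k)) :
    ∀ e : EuclN N, ‖e‖ = 1 →
      ∃ B : Fin m → Fin m → EuclN N → ℝ,
        (∀ i j, ContinuousOn (B i j) Ω) ∧
        (∀ i, ∀ x ∈ Ω,
          -lap (fun y => U i y - U i (reflPt e y)) x
            + ∑ j, B i j x * (U j x - U j (reflPt e x)) = 0) ∧
        (∀ i j, i ≠ j → ∀ x ∈ Ω, B i j x ≤ 0) ∧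
        (∀ i, ∀ x ∈ Ω, U i (reflPt e x) ≤ U i x →
          -pd (f i) i ‖x‖ (fun k => U k x) ≤ B i i x) ∧
        (∀ i j, i ≠ j → ∀ x ∈ Ω, U i (reflPt e x) ≤ U i x → U j (reflPt e x) ≤ U j x →
          -pd (f i) j ‖x‖ (fun k => U k x) ≤ B i j x) ∧
        (∀ i j, ∀ x ∈ Ω, U i (reflPt e x) = U i x → U j (reflPt e x) = U j x →
          B i j x = -pd (f i) j ‖x‖ (fun k => U k x)) ∧
        (∀ I J : Finset (Fin m), I.Nonempty → J.Nonempty → Disjoint I J →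
          I ∪ J = Finset.univ →
          ∃ i₀ ∈ I, ∃ j₀ ∈ J, 0 < volume {x ∈ halfDom Ω e | B i₀ j₀ x < 0}) := by
  intro e he
  have hσΩ : ∀ x ∈ Ω, reflPt e x ∈ Ω := fun x hx => hΩ.mem_of_norm_eq hx (norm_reflPt he x)
  have hU : ∀ i, ContDiffOn ℝ 2 (U i) Ω := fun i => (hUreg i).mono subset_closure
  have hcoopΩ : CoopAlong f Ω :=
    .of_forall_halfDom hf (by omega) hΩ.isOpen fun e' he' => (hcoup e' he').1
  have hsplit : ∀ i r, PairwiseSplit (f i r) i := fun i r => by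
    rcases le_or_gt 3 m with h3 | h3
    · obtain ⟨g, -, hg⟩ := hdecomp h3 i
      exact ⟨fun k => g k r, hg r⟩
    · exact pairwiseSplit_of_card_eq_two (by rw [Fintype.card_fin]; omega) _ _
  refine ⟨fun i j x => -mvCoeff (f i) i j ‖x‖ (fun k => U k x) (fun k => U k (reflPt e x)),
    fun i j => ?_, fun i x hx => ?_, fun i j hij x hx => ?_, fun i x _ hi => ?_,
    fun i j _ x _ hi hj => ?_, fun i j x _ hi hj => ?_, fun I J hI hJ hIJ hIJU => ?_⟩
  · have hS : ContinuousOn (fun x k => U k x) Ω := continuousOn_pi.2 fun k => (hU k).continuousOn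
    have hT : ContinuousOn (fun x k => U k (reflPt e x)) Ω :=
      continuousOn_pi.2 fun k => (hU k).continuousOn.comp continuous_reflPt.continuousOn hσΩ
    exact ((continuous_mvCoeff (hf i) i j).comp_continuousOn
      (continuous_norm.continuousOn.prodMk (hS.prodMk hT))).neg
  · rw [hsol.neg_lap_sub_reflPt hΩ hU he hx, sub_eq_sum_mvCoeff_mul (hf i) (hsplit i _)]
    simp [neg_mul, sum_neg_distrib]
  · exact neg_nonpos.2 (mvCoeff_nonneg (hcoopΩ i j hij x hx) _ _)
  · exact neg_le_neg (mvCoeff_le_pd (hf i) (hmono i i _) hi hi)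
  · exact neg_le_neg (mvCoeff_le_pd (hf i) (hmono i j _) hi hj)
  · exact neg_inj.2 (mvCoeff_of_eq hi.symm hj.symm)
  · obtain ⟨i₀, hi₀, j₀, hj₀, hpos⟩ := (hcoup (-e) (by rwa [norm_neg])).2 I J hI hJ hIJ hIJU
    have hij : i₀ ≠ j₀ := fun h => disjoint_left.1 hIJ hi₀ (h ▸ hj₀)
    refine ⟨i₀, hi₀, j₀, hj₀, (hΩ.volume_halfDom_pos_of_neg he hpos).trans_le
      (measure_mono fun x ⟨hx, hpd⟩ => ⟨hx, ?_⟩)⟩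
    rw [norm_reflPt he] at hpd
    exact neg_lt_zero.2 (mvCoeff_pos (hf i₀) hij (hsplit i₀ _) (hcoopΩ i₀ j₀ hij x hx.1) hpd)
end
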